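/- arXiv:1803.09526 — 9 statements merged into one kernel-verified Lean document; each statement's English description precedes it below -/
import Mathlib

section
/- Let n ≥ 2 and x = (x_0, …, x_{n-1}) ∈ ℝⁿ. If all entries of x are nonnegative, or all entries of x are nonpositive, then ‖C_x‖ = |x_0 + x_1 + ⋯ + x_{n-1}|. -/
set_option maxHeartbeats 1000000
set_option synthInstance.maxHeartbeats 1000000


open Matrix

/-- The `n × n` real circulant matrix whose `(j,k)` entry is `x ((k - j) mod n)`. -/
noncomputable def circulantR {n : ℕ} (x : Fin n → ℝ) : Matrix (Fin n) (Fin n) ℝ :=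
  Matrix.of fun j k => x (k - j)

/-- The spectral norm of a real matrix: the operator norm of the induced
operator on Euclidean space. -/
noncomputable def specNormR {n : ℕ} (M : Matrix (Fin n) (Fin n) ℝ) : ℝ :=
  ‖Matrix.toEuclideanCLM (𝕜 := ℝ) M‖

lemma circ_single_norm_le {n : ℕ} [NeZero n] (k : Fin n) :
    ‖Matrix.toEuclideanCLM (𝕜 := ℝ) (circulantR (Pi.single k 1))‖ ≤ 1 := by
  apply ContinuousLinearMap.opNorm_le_bound _ zero_le_one
  intro v
  rw [one_mul]
  have hco : ∀ j, (Matrix.toEuclideanCLM (𝕜 := ℝ) (circulantR (Pi.single k 1)) v) j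
      = v (k + j) := by
    intro j
    show ∑ m, Pi.single (M := fun _ => ℝ) k 1 (m - j) * v m = v (k + j)
    rw [Finset.sum_eq_single (k + j)] <;>
      simp (config := {contextual := true}) [Pi.single_apply, sub_eq_iff_eq_add]
  rw [EuclideanSpace.norm_eq, EuclideanSpace.norm_eq]
  apply le_of_eq
  congr 1
  simp only [hco]
  exact Fintype.sum_equiv (Equiv.addLeft k) _ _ (fun j => rfl)

lemma circ_decomp {n : ℕ} [NeZero n] (x : Fin n → ℝ) :
    circulantR x = ∑ k, x k • circulantR (Pi.single k 1) := by
  ext j m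
  simp [circulantR, Matrix.sum_apply, Pi.single_apply]

lemma upper {n : ℕ} [NeZero n] (x : Fin n → ℝ) :
    specNormR (circulantR x) ≤ ∑ k, |x k| := by
  rw [specNormR, circ_decomp x, map_sum]
  refine (norm_sum_le _ _).trans (Finset.sum_le_sum fun k _ => ?_)
  rw [_root_.map_smul]
  refine (norm_smul_le (x k) (Matrix.toEuclideanCLM (𝕜 := ℝ) (circulantR (Pi.single k 1)))).trans ?_
  rw [Real.norm_eq_abs]
  exact mul_le_of_le_one_right (abs_nonneg _) (circ_single_norm_le k)

lemma lower {n : ℕ} [NeZero n] (x : Fin n → ℝ) :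
    |∑ k, x k| ≤ specNormR (circulantR x) := by
  set T := Matrix.toEuclideanCLM (𝕜 := ℝ) (circulantR x)
  set v : EuclideanSpace ℝ (Fin n) := (WithLp.equiv 2 (Fin n → ℝ)).symm (fun _ => 1)
  have hv : ‖v‖ = Real.sqrt n := by
    rw [EuclideanSpace.norm_eq]
    simp [v]
  have hTv : ∀ j, (T v) j = ∑ k, x k := by
    intro j
    show ∑ m, x (m - j) * 1 = ∑ k, x k
    simp only [mul_one]
    exact Fintype.sum_equiv (Equiv.subRight j) _ _ (fun m => rfl)
  have hnTv : ‖T v‖ = |∑ k, x k| * Real.sqrt n := by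
    rw [EuclideanSpace.norm_eq]
    simp only [hTv, Real.norm_eq_abs, sq_abs, Finset.sum_const, Finset.card_univ,
      Fintype.card_fin, nsmul_eq_mul]
    rw [Real.sqrt_mul (by positivity), Real.sqrt_sq_eq_abs]
    ring
  have h1 : ‖T v‖ ≤ ‖T‖ * ‖v‖ := T.le_opNorm v
  rw [hnTv, hv] at h1
  have hs : (0:ℝ) < Real.sqrt n := by
    have := Nat.pos_of_ne_zero (NeZero.ne n)
    positivity
  calc |∑ k, x k| = |∑ k, x k| * Real.sqrt n / Real.sqrt n := by field_simp
    _ ≤ ‖T‖ * Real.sqrt n / Real.sqrt n := by gcongr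
    _ = ‖T‖ := by field_simp

theorem stmt1 (n : ℕ) (hn : 2 ≤ n) (x : Fin n → ℝ)
    (h : (∀ k, 0 ≤ x k) ∨ (∀ k, x k ≤ 0)) :
    specNormR (circulantR x) = |∑ k : Fin n, x k| := by
  haveI : NeZero n := ⟨by omega⟩
  have hS : ∑ k, |x k| = |∑ k : Fin n, x k| := by
    rcases h with h | h
    · rw [abs_of_nonneg (Finset.sum_nonneg fun k _ => h k)]
      exact Finset.sum_congr rfl fun k _ => abs_of_nonneg (h k)
    · rw [abs_of_nonpos (Finset.sum_nonpos fun k _ => h k), ← Finset.sum_neg_distrib]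
      exact Finset.sum_congr rfl fun k _ => abs_of_nonpos (h k)
  exact le_antisymm ((upper x).trans_eq hS) (lower x)
end

section
/- Let n ≥ 2, x ∈ ℝⁿ, and let B_x := C_xᵀ C_x. If every entry of B_x is nonnegative, then ‖C_x‖ = |x_0 + x_1 + ⋯ + x_{n-1}|. -/
open Matrix

lemma toEuclideanCLM_apply' {n : ℕ} (M : Matrix (Fin n) (Fin n) ℝ)
    (v : EuclideanSpace ℝ (Fin n)) (j : Fin n) :
    (Matrix.toEuclideanCLM (𝕜 := ℝ) M v) j = ∑ k, M j k * v k := rfl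

/-- A nonnegative matrix with all row and column sums equal to `r ≥ 0` has
operator norm `r`. -/
lemma opnorm_eq_of_rowcol {n : ℕ} (hn : 1 ≤ n) (M : Matrix (Fin n) (Fin n) ℝ)
    (hM : ∀ j k, 0 ≤ M j k) (r : ℝ) (hr : 0 ≤ r)
    (hrow : ∀ j, ∑ k, M j k = r) (hcol : ∀ k, ∑ j, M j k = r) :
    ‖Matrix.toEuclideanCLM (𝕜 := ℝ) M‖ = r := by
  have hne : Nonempty (Fin n) := Fin.pos_iff_nonempty.mp hn
  apply le_antisymm
  · apply ContinuousLinearMap.opNorm_le_bound _ hr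
    intro v
    have hsq : ‖Matrix.toEuclideanCLM (𝕜 := ℝ) M v‖ ^ 2 ≤ (r * ‖v‖) ^ 2 := by
      rw [EuclideanSpace.norm_eq, Real.sq_sqrt (by positivity), mul_pow,
        EuclideanSpace.norm_eq, Real.sq_sqrt (by positivity)]
      have step1 : ∀ j : Fin n, ‖(Matrix.toEuclideanCLM (𝕜 := ℝ) M v) j‖ ^ 2 ≤
          r * ∑ k, M j k * (v k) ^ 2 := by
        intro j
        rw [toEuclideanCLM_apply', Real.norm_eq_abs, sq_abs]
        have := Finset.sum_mul_sq_le_sq_mul_sq Finset.univ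
          (fun k => Real.sqrt (M j k)) (fun k => Real.sqrt (M j k) * v k)
        have e1 : ∀ k : Fin n, Real.sqrt (M j k) * (Real.sqrt (M j k) * v k)
            = M j k * v k := by
          intro k
          rw [← mul_assoc, Real.mul_self_sqrt (hM j k)]
        have e2 : ∀ k : Fin n, Real.sqrt (M j k) ^ 2 = M j k :=
          fun k => Real.sq_sqrt (hM j k)
        have e3 : ∀ k : Fin n, (Real.sqrt (M j k) * v k) ^ 2 = M j k * v k ^ 2 := by
          intro k
          rw [mul_pow, Real.sq_sqrt (hM j k)]
        simp only [e1, e2, e3] at this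
        calc (∑ k, M j k * v k) ^ 2 ≤ (∑ k, M j k) * ∑ k, M j k * v k ^ 2 := this
          _ = r * ∑ k, M j k * v k ^ 2 := by rw [hrow j]
      calc ∑ j, ‖(Matrix.toEuclideanCLM (𝕜 := ℝ) M v) j‖ ^ 2
          ≤ ∑ j, r * ∑ k, M j k * (v k) ^ 2 := Finset.sum_le_sum fun j _ => step1 j
        _ = r * ∑ j, ∑ k, M j k * v k ^ 2 := (Finset.mul_sum _ _ _).symm
        _ = r * ∑ k, ∑ j, M j k * v k ^ 2 := by rw [Finset.sum_comm]
        _ = r * ∑ k, (∑ j, M j k) * v k ^ 2 := by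
            congr 1
            exact Finset.sum_congr rfl fun k _ => (Finset.sum_mul _ _ _).symm
        _ = r ^ 2 * ∑ k, v k ^ 2 := by
            simp only [hcol]
            rw [← Finset.mul_sum, ← mul_assoc, sq]
        _ = r ^ 2 * ∑ k, ‖v k‖ ^ 2 := by simp [Real.norm_eq_abs, sq_abs]
    have h1 : ‖Matrix.toEuclideanCLM (𝕜 := ℝ) M v‖ =
        Real.sqrt (‖Matrix.toEuclideanCLM (𝕜 := ℝ) M v‖ ^ 2) :=
      (Real.sqrt_sq (norm_nonneg _)).symm
    have h2 : r * ‖v‖ = Real.sqrt ((r * ‖v‖) ^ 2) :=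
      (Real.sqrt_sq (by positivity)).symm
    rw [h1, h2]
    exact Real.sqrt_le_sqrt hsq
  · set v : EuclideanSpace ℝ (Fin n) := (WithLp.equiv _ _).symm (fun _ => (1 : ℝ)) with hv
    have hv0 : v ≠ 0 := by
      intro hz
      have : v (Classical.arbitrary (Fin n)) = 0 := by rw [hz]; rfl
      simp [hv] at this
    have hMv : Matrix.toEuclideanCLM (𝕜 := ℝ) M v = r • v := by
      ext j
      rw [toEuclideanCLM_apply']
      have : (r • v) j = r * v j := rfl
      rw [this]
      simp only [hv]
      calc ∑ k, M j k * 1 = ∑ k, M j k := by simp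
        _ = r := hrow j
        _ = r * 1 := by ring
        _ = r * (WithLp.equiv 2 (Fin n → ℝ)).symm (fun _ => (1:ℝ)) j := rfl
    have hb := (Matrix.toEuclideanCLM (𝕜 := ℝ) M).le_opNorm v
    rw [hMv, norm_smul, Real.norm_eq_abs, abs_of_nonneg hr] at hb
    exact le_of_mul_le_mul_right hb (norm_pos_iff.mpr hv0)

theorem stmt3 (n : ℕ) (hn : 2 ≤ n) (x : Fin n → ℝ)
    (h : ∀ j k, 0 ≤ ((circulantR x)ᵀ * circulantR x) j k) :
    specNormR (circulantR x) = |∑ k : Fin n, x k| := by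
  haveI : NeZero n := ⟨by omega⟩
  set s : ℝ := ∑ k : Fin n, x k with hs
  set C := circulantR x with hC
  have hrowC : ∀ j : Fin n, ∑ k, C j k = s := by
    intro j
    exact Fintype.sum_equiv (Equiv.subRight j) _ _ (fun k => rfl)
  have hcolC : ∀ k : Fin n, ∑ j, C j k = s := by
    intro k
    exact Fintype.sum_equiv (Equiv.subLeft k) _ _ (fun j => rfl)
  have hB : ∀ j k, (Cᵀ * C) j k = ∑ i, C i j * C i k := by
    intro j k
    simp [Matrix.mul_apply, Matrix.transpose_apply]
  have hrowB : ∀ j : Fin n, ∑ k, (Cᵀ * C) j k = s ^ 2 := by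
    intro j
    simp only [hB]
    rw [Finset.sum_comm]
    calc ∑ i, ∑ k, C i j * C i k = ∑ i : Fin n, C i j * s := by
          congr 1; funext i; rw [← Finset.mul_sum, hrowC i]
      _ = s * s := by rw [← Finset.sum_mul, hcolC j]
      _ = s ^ 2 := (sq s).symm
  have hcolB : ∀ k : Fin n, ∑ j, (Cᵀ * C) j k = s ^ 2 := by
    intro k
    simp only [hB]
    rw [Finset.sum_comm]
    calc ∑ i, ∑ j, C i j * C i k = ∑ i : Fin n, s * C i k := by
          congr 1; funext i; rw [← Finset.sum_mul, hrowC i]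
      _ = s * s := by rw [← Finset.mul_sum, hcolC k]
      _ = s ^ 2 := (sq s).symm
  have hnormB : ‖Matrix.toEuclideanCLM (𝕜 := ℝ) (Cᵀ * C)‖ = s ^ 2 :=
    opnorm_eq_of_rowcol (le_trans one_le_two hn) _ h (s ^ 2) (sq_nonneg s) hrowB hcolB
  have hstar : (Cᵀ * C : Matrix (Fin n) (Fin n) ℝ) = star C * C := by
    rw [Matrix.star_eq_conjTranspose, Matrix.conjTranspose_eq_transpose_of_trivial]
  rw [hstar, _root_.map_mul, map_star] at hnormB
  rw [CStarRing.norm_star_mul_self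
    (E := EuclideanSpace ℝ (Fin n) →L[ℝ] EuclideanSpace ℝ (Fin n))] at hnormB
  have : specNormR C = Real.sqrt (s ^ 2) := by
    unfold specNormR
    rw [← Real.sqrt_sq (norm_nonneg (Matrix.toEuclideanCLM (𝕜 := ℝ) C)), sq, hnormB]
  rw [this, Real.sqrt_sq_eq_abs]
end

section
/- Let n ≥ 2, x ∈ ℝⁿ, and let B_x := C_xᵀ C_x. If every entry of B_x is strictly positive, then for every n-th root of unity t ≠ 1 one has |c(t)| < |c(1)|, where c(t) = x_0 + x_1 t + ⋯ + x_{n-1} t^{n-1}. -/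
open Matrix

/-- The symbol `c(t) = x₀ + x₁ t + ⋯ + x_{n-1} t^{n-1}` of the real circulant matrix `C_x`,
evaluated at a complex number `t`. -/
noncomputable def symbolR {n : ℕ} (x : Fin n → ℝ) (t : ℂ) : ℂ :=
  ∑ j : Fin n, (x j : ℂ) * t ^ (j : ℕ)

theorem stmt4 (n : ℕ) (hn : 2 ≤ n) (x : Fin n → ℝ)
    (h : ∀ j k, 0 < ((circulantR x)ᵀ * circulantR x) j k) :
    ∀ t : ℂ, t ^ n = 1 → t ≠ 1 →
      ‖symbolR x t‖ < ‖symbolR x 1‖ := by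
  intro t htn ht1
  have hn0 : n ≠ 0 := by omega
  haveI : NeZero n := ⟨hn0⟩
  set y : Fin n → ℝ := fun k => ((circulantR x)ᵀ * circulantR x) 0 k with hy
  have hypos : ∀ k, 0 < y k := fun k => h 0 k
  have hyexp : ∀ k : Fin n, y k = ∑ j : Fin n, x (0 - j) * x (k - j) := by
    intro k
    simp [hy, Matrix.mul_apply, circulantR, Matrix.transpose_apply]
  -- key identity
  have key : ∀ s : ℂ, s ^ n = 1 →
      Complex.normSq (symbolR x s) = ∑ k : Fin n, y k * (s ^ (k : ℕ)).re := by
    intro s hsn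
    have hmod : ∀ m : ℕ, s ^ (m % n) = s ^ m := by
      intro m
      conv_rhs => rw [← Nat.div_add_mod m n]
      rw [pow_add, pow_mul, hsn, one_pow, one_mul]
    have hpadd : ∀ a b : Fin n, s ^ ((a + b : Fin n) : ℕ) = s ^ (a : ℕ) * s ^ (b : ℕ) := by
      intro a b
      rw [Fin.val_add, hmod, pow_add]
    have habs : ‖s‖ = 1 := by
      exact Complex.norm_eq_one_of_pow_eq_one hsn hn0
    have hneg : ∀ i : Fin n, s ^ (((-i) : Fin n) : ℕ) = (starRingEnd ℂ) (s ^ (i : ℕ)) := by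
      intro i
      have h1 : s ^ (((-i) : Fin n) : ℕ) * s ^ (i : ℕ) = 1 := by
        rw [← hpadd]
        simp
      have habsi : ‖s ^ (i : ℕ)‖ = 1 := by
        rw [norm_pow, habs, one_pow]
      rw [← Complex.inv_eq_conj habsi]
      exact eq_inv_of_mul_eq_one_left h1
    have hconj : (starRingEnd ℂ) (symbolR x s)
        = ∑ i : Fin n, (x i : ℂ) * s ^ (((-i) : Fin n) : ℕ) := by
      simp only [symbolR, map_sum]
      refine Finset.sum_congr rfl fun i _ => ?_
      rw [_root_.map_mul, Complex.conj_ofReal, ← hneg i]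
    -- complex identity
    have hc : (∑ k : Fin n, (y k : ℂ) * s ^ (k : ℕ))
        = symbolR x s * (starRingEnd ℂ) (symbolR x s) := by
      have hL : (∑ k : Fin n, (y k : ℂ) * s ^ (k : ℕ))
          = ∑ j : Fin n, ∑ k : Fin n, (x (0 - j) : ℂ) * (x (k - j) : ℂ) * s ^ (k : ℕ) := by
        rw [Finset.sum_comm]
        refine Finset.sum_congr rfl fun k _ => ?_
        rw [hyexp k]
        push_cast
        rw [Finset.sum_mul]
      have hR : symbolR x s * (starRingEnd ℂ) (symbolR x s)
          = ∑ a : Fin n, ∑ b : Fin n,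
              ((x b : ℂ) * s ^ (b : ℕ)) * ((x a : ℂ) * s ^ (((-a) : Fin n) : ℕ)) := by
        rw [hconj, symbolR, Finset.sum_mul_sum]
        exact Finset.sum_comm
      rw [hL, hR]
      refine Fintype.sum_equiv (Equiv.neg (Fin n)) _ _ fun j => ?_
      simp only [Equiv.neg_apply, neg_neg, zero_sub]
      refine Fintype.sum_equiv (Equiv.subRight j) _ _ fun k => ?_
      simp only [Equiv.subRight_apply]
      have hs : s ^ (k : ℕ) = s ^ ((k - j : Fin n) : ℕ) * s ^ (j : ℕ) := by
        rw [← hpadd, sub_add_cancel]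
      rw [hs]
      ring
    have h2 := congrArg Complex.re hc
    rw [Complex.mul_conj] at h2
    simp only [Complex.ofReal_re] at h2
    rw [← h2, Complex.re_sum]
    refine Finset.sum_congr rfl fun k _ => ?_
    rw [Complex.re_ofReal_mul]
  have habs : ‖t‖ = 1 := by
    exact Complex.norm_eq_one_of_pow_eq_one htn hn0
  have hlt : Complex.normSq (symbolR x t) < Complex.normSq (symbolR x 1) := by
    rw [key t htn, key 1 (one_pow n)]
    refine Finset.sum_lt_sum (fun k _ => ?_) ⟨⟨1, by omega⟩, Finset.mem_univ _, ?_⟩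
    · have hre : (t ^ (k : ℕ)).re ≤ 1 := by
        have h3 := Complex.re_le_norm (t ^ (k : ℕ))
        rw [norm_pow, habs, one_pow] at h3
        linarith
      have h4 : ((1 : ℂ) ^ (k : ℕ)).re = 1 := by simp
      rw [h4]
      nlinarith [hypos k]
    · have hv : ((⟨1, by omega⟩ : Fin n) : ℕ) = 1 := rfl
      rw [hv, pow_one, pow_one]
      have hre : t.re < 1 := by
        have hle : t.re ≤ 1 := by
          have h3 := Complex.re_le_norm t
          rw [habs] at h3
          exact h3
        rcases lt_or_eq_of_le hle with h' | h'
        · exact h'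
        · exfalso
          have him : t.im = 0 := by
            have h5 : Complex.normSq t = 1 := by
              rw [← Complex.sq_norm, habs, one_pow]
            rw [Complex.normSq_apply] at h5
            nlinarith
          exact ht1 (Complex.ext h' him)
      have h6 : (1 : ℂ).re = 1 := by simp
      rw [h6]
      nlinarith [hypos ⟨1, by omega⟩]
  refine lt_of_pow_lt_pow_left₀ 2 (norm_nonneg _) ?_
  rw [Complex.sq_norm, Complex.sq_norm]
  exact hlt
end

section
/- Let n ≥ 2, x ∈ ℝⁿ, and let B_x := C_xᵀ C_x. If there exists m ∈ ℕ, m ≥ 1, such that every entry of the matrix power B_xᵐ is nonnegative, then ‖C_x‖ = |x_0 + x_1 + ⋯ + x_{n-1}|. -/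
open Matrix

open scoped Matrix.Norms.L2Operator

/-- For a selfadjoint element of a C*-ring, `‖a‖ ^ m ≤ ‖a ^ m‖`. -/
lemma sa_norm_pow_le {E : Type*} [NormedRing E] [StarRing E] [CStarRing E] {a : E}
    (ha : IsSelfAdjoint a) {m : ℕ} (hm : 1 ≤ m) : ‖a‖ ^ m ≤ ‖a ^ m‖ := by
  have key : ‖a ^ 2 ^ m‖ = ‖a‖ ^ 2 ^ m := by
    rw [← coe_nnnorm, ← coe_nnnorm, ha.nnnorm_pow_two_pow, NNReal.coe_pow]
  have hmN : m ≤ 2 ^ m := Nat.le_of_lt (Nat.lt_two_pow_self)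
  rcases eq_or_lt_of_le (norm_nonneg a) with h0 | h0
  · have ha0 : a = 0 := norm_eq_zero.mp h0.symm
    subst ha0
    simp [zero_pow (by omega : m ≠ 0)]
  rcases eq_or_lt_of_le hmN with hEq | hlt
  · conv_lhs => rw [hEq]
    conv_rhs => rw [hEq]
    exact key.ge
  · have hsplit : a ^ 2 ^ m = a ^ m * a ^ (2 ^ m - m) := by
      rw [← pow_add]; congr 1; omega
    have h1 : ‖a‖ ^ 2 ^ m ≤ ‖a ^ m‖ * ‖a‖ ^ (2 ^ m - m) := by
      calc ‖a‖ ^ 2 ^ m = ‖a ^ 2 ^ m‖ := key.symm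
        _ = ‖a ^ m * a ^ (2 ^ m - m)‖ := by rw [hsplit]
        _ ≤ ‖a ^ m‖ * ‖a ^ (2 ^ m - m)‖ := norm_mul_le _ _
        _ ≤ ‖a ^ m‖ * ‖a‖ ^ (2 ^ m - m) :=
            mul_le_mul_of_nonneg_left (norm_pow_le' a (by omega)) (norm_nonneg _)
    have h2 : ‖a‖ ^ 2 ^ m = ‖a‖ ^ m * ‖a‖ ^ (2 ^ m - m) := by
      rw [← pow_add]; congr 1; omega
    rw [h2] at h1
    exact le_of_mul_le_mul_right h1 (pow_pos h0 _)

/-- Cauchy–Schwarz style bound: an entrywise nonnegative matrix with all row and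
column sums equal to `t` satisfies `∑ ((A *ᵥ w) j)^2 ≤ t^2 * ∑ w^2`. -/
lemma key_sum_bound {n : ℕ} (A : Matrix (Fin n) (Fin n) ℝ) (hA : ∀ j k, 0 ≤ A j k)
    (t : ℝ) (hrow : ∀ j, ∑ k, A j k = t) (hcol : ∀ k, ∑ j, A j k = t) (w : Fin n → ℝ) :
    ∑ j, (∑ k, A j k * w k) ^ 2 ≤ t ^ 2 * ∑ k, w k ^ 2 := by
  have hrowCS : ∀ j, (∑ k, A j k * w k) ^ 2 ≤ t * ∑ k, A j k * w k ^ 2 := by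
    intro j
    have := Finset.sum_mul_sq_le_sq_mul_sq Finset.univ
      (fun k => Real.sqrt (A j k)) (fun k => Real.sqrt (A j k) * w k)
    have e1 : ∀ k, Real.sqrt (A j k) * (Real.sqrt (A j k) * w k) = A j k * w k := by
      intro k; rw [← mul_assoc, Real.mul_self_sqrt (hA j k)]
    have e2 : ∀ k, Real.sqrt (A j k) ^ 2 = A j k := fun k => Real.sq_sqrt (hA j k)
    have e3 : ∀ k, (Real.sqrt (A j k) * w k) ^ 2 = A j k * w k ^ 2 := by
      intro k; rw [mul_pow, e2]
    simp only [e1, e2, e3] at this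
    simpa [hrow j] using this
  calc ∑ j, (∑ k, A j k * w k) ^ 2 ≤ ∑ j, t * ∑ k, A j k * w k ^ 2 :=
        Finset.sum_le_sum fun j _ => hrowCS j
    _ = t * ∑ k, (∑ j, A j k) * w k ^ 2 := by
        rw [← Finset.mul_sum, Finset.sum_comm]
        congr 1; apply Finset.sum_congr rfl; intro k _; rw [Finset.sum_mul]
    _ = t ^ 2 * ∑ k, w k ^ 2 := by
        simp only [hcol]; rw [← Finset.mul_sum, ← mul_assoc, sq]

theorem stmt6 (n : ℕ) (hn : 2 ≤ n) (x : Fin n → ℝ)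
    (h : ∃ m : ℕ, 1 ≤ m ∧ ∀ j k, 0 ≤ (((circulantR x)ᵀ * circulantR x) ^ m) j k) :
    specNormR (circulantR x) = |∑ k : Fin n, x k| := by
  obtain ⟨m, hm, hpos⟩ := h
  haveI : NeZero n := ⟨by omega⟩
  set C := circulantR x with hC
  set B := Cᵀ * C with hB
  set s := ∑ k : Fin n, x k with hs
  have hCH : Cᴴ = Cᵀ := by ext j k; simp [conjTranspose_apply]
  -- specNormR is the L2 operator norm
  have hsn : specNormR C = ‖C‖ := rfl
  -- C * ones = s • ones
  have hCones : C *ᵥ (fun _ => (1 : ℝ)) = fun _ => s := by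
    funext j
    simp only [mulVec, dotProduct, hC, circulantR, of_apply, mul_one]
    exact Equiv.sum_comp (Equiv.subRight j) x
  have hCTones : Cᵀ *ᵥ (fun _ => (1 : ℝ)) = fun _ => s := by
    funext j
    simp only [mulVec, dotProduct, transpose_apply, hC, circulantR, of_apply, mul_one]
    exact Equiv.sum_comp (Equiv.subLeft j) x
  have hBones : B *ᵥ (fun _ => (1 : ℝ)) = fun _ => s ^ 2 := by
    rw [hB, ← mulVec_mulVec, hCones]
    have : (fun _ : Fin n => s) = s • (fun _ : Fin n => (1 : ℝ)) := by
      funext j; simp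
    rw [this, mulVec_smul, hCTones]
    funext j; simp [sq]
  have hBm : ∀ l : ℕ, (B ^ l) *ᵥ (fun _ => (1 : ℝ)) = fun _ => (s ^ 2) ^ l := by
    intro l
    induction l with
    | zero => simp [one_mulVec]
    | succ l ih =>
      rw [pow_succ', ← mulVec_mulVec, ih]
      have : (fun _ : Fin n => (s ^ 2) ^ l) = (s ^ 2) ^ l • (fun _ : Fin n => (1 : ℝ)) := by
        funext j; simp
      rw [this, mulVec_smul, hBones]
      funext j; simp [pow_succ', mul_comm]
  -- B^m is symmetric
  have hBsym : Bᵀ = B := by rw [hB, transpose_mul, transpose_transpose]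
  have hBmsym : (B ^ m)ᵀ = B ^ m := by rw [transpose_pow, hBsym]
  set t : ℝ := (s ^ 2) ^ m with ht
  have hrow : ∀ j, ∑ k, (B ^ m) j k = t := by
    intro j
    have := congrFun (hBm m) j
    simpa [mulVec, dotProduct] using this
  have hcol : ∀ k, ∑ j, (B ^ m) j k = t := by
    intro k
    have := congrFun (hBm m) k
    calc ∑ j, (B ^ m) j k = ∑ j, (B ^ m)ᵀ k j := rfl
      _ = ∑ j, (B ^ m) k j := by rw [hBmsym]
      _ = t := hrow k
  have ht0 : (0:ℝ) ≤ t := pow_nonneg (sq_nonneg s) m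
  -- upper bound on ‖B ^ m‖
  have hBmnorm : ‖B ^ m‖ ≤ t := by
    rw [Matrix.cstar_norm_def]
    apply ContinuousLinearMap.opNorm_le_bound _ ht0
    intro y
    set w : Fin n → ℝ := WithLp.equiv 2 (Fin n → ℝ) y with hw
    have hy : y = (WithLp.equiv 2 (Fin n → ℝ)).symm w := by simp [hw]
    rw [hy, (show ∀ (A : Matrix (Fin n) (Fin n) ℝ) (u : Fin n → ℝ), toEuclideanCLM (𝕜 := ℝ) A ((WithLp.equiv 2 (Fin n → ℝ)).symm u) = (WithLp.equiv 2 (Fin n → ℝ)).symm (Matrix.toLin' A u) from fun _ _ => rfl), Matrix.toLin'_apply]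
    have hnw : ‖(WithLp.equiv 2 (Fin n → ℝ)).symm w‖ = Real.sqrt (∑ k, w k ^ 2) := by
      rw [EuclideanSpace.norm_eq]
      congr 1; apply Finset.sum_congr rfl; intro k _
      simp [sq_abs]
    have hnAw : ‖(WithLp.equiv 2 (Fin n → ℝ)).symm ((B ^ m) *ᵥ w)‖ =
        Real.sqrt (∑ j, ((B ^ m) *ᵥ w) j ^ 2) := by
      rw [EuclideanSpace.norm_eq]
      congr 1; apply Finset.sum_congr rfl; intro j _
      simp [sq_abs]
    rw [hnAw, hnw]
    have hkey := key_sum_bound (B ^ m) hpos t hrow hcol w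
    have : ∑ j, ((B ^ m) *ᵥ w) j ^ 2 ≤ t ^ 2 * ∑ k, w k ^ 2 := by
      simpa [mulVec, dotProduct] using hkey
    calc Real.sqrt (∑ j, ((B ^ m) *ᵥ w) j ^ 2) ≤ Real.sqrt (t ^ 2 * ∑ k, w k ^ 2) :=
          Real.sqrt_le_sqrt this
      _ = t * Real.sqrt (∑ k, w k ^ 2) := by
          rw [Real.sqrt_mul (sq_nonneg t), Real.sqrt_sq ht0]
  -- B is selfadjoint
  have hBsa : IsSelfAdjoint B := by
    show star B = B
    rw [hB, ← hCH]
    simp [star_eq_conjTranspose]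
  -- ‖B‖ ≤ s ^ 2
  have hBnorm : ‖B‖ ≤ s ^ 2 := by
    have h1 : ‖B‖ ^ m ≤ ‖B ^ m‖ := sa_norm_pow_le hBsa hm
    have h2 : ‖B‖ ^ m ≤ (s ^ 2) ^ m := h1.trans hBmnorm
    exact (pow_le_pow_iff_left₀ (norm_nonneg B) (sq_nonneg s) (by omega)).mp h2
  -- ‖C‖ ^ 2 = ‖B‖
  have hCB : ‖C‖ * ‖C‖ = ‖B‖ := by
    rw [hB, ← hCH]
    exact (Matrix.l2_opNorm_conjTranspose_mul_self C).symm
  have hupper : ‖C‖ ≤ |s| := by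
    have h1 : ‖C‖ ^ 2 ≤ |s| ^ 2 := by rw [sq, hCB, sq_abs]; exact hBnorm
    exact (pow_le_pow_iff_left₀ (norm_nonneg C) (abs_nonneg s) two_ne_zero).mp h1
  -- lower bound
  have hlower : |s| ≤ ‖C‖ := by
    set v : EuclideanSpace ℝ (Fin n) := (WithLp.equiv 2 (Fin n → ℝ)).symm (fun _ => 1) with hv
    have hCv : toEuclideanCLM (𝕜 := ℝ) C v = (WithLp.equiv 2 (Fin n → ℝ)).symm (fun _ => s) := by
      rw [hv, (show ∀ (A : Matrix (Fin n) (Fin n) ℝ) (u : Fin n → ℝ), toEuclideanCLM (𝕜 := ℝ) A ((WithLp.equiv 2 (Fin n → ℝ)).symm u) = (WithLp.equiv 2 (Fin n → ℝ)).symm (Matrix.toLin' A u) from fun _ _ => rfl), Matrix.toLin'_apply, hCones]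
    have hnv : ‖v‖ = Real.sqrt n := by
      rw [hv, EuclideanSpace.norm_eq]
      simp
    have hnCv : ‖toEuclideanCLM (𝕜 := ℝ) C v‖ = |s| * Real.sqrt n := by
      rw [hCv, EuclideanSpace.norm_eq]
      have : ∑ _i : Fin n, ‖s‖ ^ 2 = (n : ℝ) * s ^ 2 := by
        simp [Real.norm_eq_abs, sq_abs]
      simp only [WithLp.equiv_symm_apply, WithLp.ofLp_toLp]
      rw [Finset.sum_congr rfl (fun i _ => rfl)]
      rw [show (∑ _i : Fin n, ‖s‖ ^ 2) = (n : ℝ) * s ^ 2 from this]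
      rw [Real.sqrt_mul (Nat.cast_nonneg n), Real.sqrt_sq_eq_abs, mul_comm]
    have hble := (toEuclideanCLM (𝕜 := ℝ) C).le_opNorm v
    rw [hnCv, hnv] at hble
    have hsq : (0:ℝ) < Real.sqrt n := Real.sqrt_pos.mpr (by positivity)
    calc |s| = |s| * Real.sqrt n / Real.sqrt n := by field_simp
      _ ≤ ‖toEuclideanCLM (𝕜 := ℝ) C‖ * Real.sqrt n / Real.sqrt n := by
          gcongr
      _ = ‖C‖ := by field_simp [Matrix.cstar_norm_def]; rfl
  rw [hsn]
  exact le_antisymm hupper hlower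
end

section
/- Let n ≥ 2, x ∈ ℝⁿ, and let B_x := C_xᵀ C_x. If there exists m ∈ ℕ, m ≥ 1, such that every entry of the matrix power B_xᵐ is strictly positive, then for every n-th root of unity t ≠ 1 one has |c(t)| < |c(1)|, where c(t) = x_0 + x_1 t + ⋯ + x_{n-1} t^{n-1}. -/
open Matrix

namespace Stmt7Aux

variable {n : ℕ} [NeZero n]

lemma pow_val_mod (t : ℂ) (ht : t ^ n = 1) (k : ℕ) : t ^ (k % n) = t ^ k := by
  conv_rhs => rw [← Nat.div_add_mod k n]
  rw [pow_add, pow_mul, ht, one_pow, one_mul]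

lemma pow_val_add (t : ℂ) (ht : t ^ n = 1) (a b : Fin n) :
    t ^ (((a + b) : Fin n) : ℕ) = t ^ (a : ℕ) * t ^ (b : ℕ) := by
  rw [Fin.val_add, pow_val_mod t ht, pow_add]

lemma abs_eq_one (t : ℂ) (ht : t ^ n = 1) : ‖t‖ = 1 := by
  have h1 : ‖t‖ ^ n = 1 := by rw [← norm_pow, ht]; simp
  have h0 : 0 ≤ ‖t‖ := norm_nonneg _
  have hn : n ≠ 0 := NeZero.ne n
  rcases lt_trichotomy (‖t‖) 1 with h | h | h
  · have := pow_lt_one₀ h0 h hn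
    linarith
  · exact h
  · have := one_lt_pow₀ h hn
    linarith

lemma S_mulVec (a b : Fin n → ℝ) (t : ℂ) (ht : t ^ n = 1) :
    symbolR (circulant a *ᵥ b) t = symbolR a t * symbolR b t := by
  unfold symbolR
  rw [Finset.sum_mul_sum]
  have step1 : ∀ i : Fin n, ((circulant a *ᵥ b) i : ℂ) * t ^ (i : ℕ)
      = ∑ j : Fin n, ((a (i - j) : ℂ) * (b j : ℂ)) * t ^ (i : ℕ) := by
    intro i
    rw [← Finset.sum_mul]
    congr 1
    simp [mulVec, dotProduct, circulant_apply]
  calc ∑ i : Fin n, ((circulant a *ᵥ b) i : ℂ) * t ^ (i : ℕ)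
      = ∑ i : Fin n, ∑ j : Fin n, ((a (i - j) : ℂ) * (b j : ℂ)) * t ^ (i : ℕ) := by
        exact Finset.sum_congr rfl fun i _ => step1 i
    _ = ∑ j : Fin n, ∑ i : Fin n, ((a (i - j) : ℂ) * (b j : ℂ)) * t ^ (i : ℕ) :=
        Finset.sum_comm
    _ = ∑ j : Fin n, ∑ r : Fin n, ((a r : ℂ) * (b j : ℂ)) * (t ^ (r : ℕ) * t ^ (j : ℕ)) := by
        refine Finset.sum_congr rfl fun j _ => ?_
        refine Fintype.sum_equiv (Equiv.subRight j) _ _ fun r => ?_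
        simp only [Equiv.subRight_apply]
        have : t ^ (r : ℕ) = t ^ ((r - j : Fin n) : ℕ) * t ^ (j : ℕ) := by
          rw [← pow_val_add t ht, sub_add_cancel]
        rw [this]
    _ = ∑ j : Fin n, ∑ r : Fin n, ((a r : ℂ) * t ^ (r : ℕ)) * ((b j : ℂ) * t ^ (j : ℕ)) := by
        refine Finset.sum_congr rfl fun j _ => Finset.sum_congr rfl fun r _ => by ring
    _ = ∑ r : Fin n, ∑ j : Fin n, ((a r : ℂ) * t ^ (r : ℕ)) * ((b j : ℂ) * t ^ (j : ℕ)) :=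
        Finset.sum_comm

lemma S_neg (xv : Fin n → ℝ) (t : ℂ) (ht : t ^ n = 1) :
    symbolR (fun i => xv (-i)) t = (starRingEnd ℂ) (symbolR xv t) := by
  unfold symbolR
  rw [map_sum]
  refine Fintype.sum_equiv (Equiv.neg (Fin n)) _ _ fun j => ?_
  simp only [Equiv.neg_apply, neg_neg, RingHom.map_mul, Complex.conj_ofReal]
  congr 1
  -- t ^ ((-j : Fin n) : ℕ) = conj (t ^ (j:ℕ))
  have h1 : t ^ (((-j) : Fin n) : ℕ) * t ^ (j : ℕ) = 1 := by
    rw [← pow_val_add t ht, neg_add_cancel]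
    simp
  have habs : ‖t ^ (j : ℕ)‖ = 1 := by
    rw [norm_pow, abs_eq_one t ht, one_pow]
  have hne : t ^ (j : ℕ) ≠ 0 := by
    intro h0; rw [h0] at habs; simp at habs
  have hinv : t ^ (((-j) : Fin n) : ℕ) = (t ^ (j : ℕ))⁻¹ :=
    eq_inv_of_mul_eq_one_left h1
  rw [hinv, Complex.inv_def, Complex.normSq_eq_norm_sq, habs]
  simp

/-- Iterated convolution: `upow u k` is the vector of `circulant u ^ (k+1)`. -/
noncomputable def upow (u : Fin n → ℝ) : ℕ → (Fin n → ℝ)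
  | 0 => u
  | k + 1 => circulant u *ᵥ upow u k

lemma circulant_upow (u : Fin n → ℝ) (k : ℕ) :
    circulant (upow u k) = circulant u ^ (k + 1) := by
  induction k with
  | zero => simp [upow]
  | succ k ih =>
    rw [upow, ← Matrix.circulant_mul, ih, ← pow_succ']

lemma S_upow (u : Fin n → ℝ) (k : ℕ) (t : ℂ) (ht : t ^ n = 1) :
    symbolR (upow u k) t = (symbolR u t) ^ (k + 1) := by
  induction k with
  | zero => simp [upow]
  | succ k ih =>
    rw [upow, S_mulVec _ _ t ht, ih, ← pow_succ']

end Stmt7Aux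

open Stmt7Aux in
theorem stmt7 (n : ℕ) (hn : 2 ≤ n) (x : Fin n → ℝ)
    (h : ∃ m : ℕ, 1 ≤ m ∧ ∀ j k, 0 < (((circulantR x)ᵀ * circulantR x) ^ m) j k) :
    ∀ t : ℂ, t ^ n = 1 → t ≠ 1 →
      ‖symbolR x t‖ < ‖symbolR x 1‖ := by
  haveI : NeZero n := ⟨by omega⟩
  intro t htn ht1
  obtain ⟨m, hm1, hpos⟩ := h
  obtain ⟨k, rfl⟩ : ∃ k, m = k + 1 := ⟨m - 1, by omega⟩
  set x' : Fin n → ℝ := fun i => x (-i) with hx'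
  have hC : circulantR x = circulant x' := by
    ext j kk
    simp [circulantR, circulant_apply, hx', neg_sub]
  have hCT : (circulantR x)ᵀ = circulant x := by
    ext j kk
    simp [circulantR, circulant_apply, transpose_apply]
  set u : Fin n → ℝ := circulant x *ᵥ x' with hu
  have hB : (circulantR x)ᵀ * circulantR x = circulant u := by
    rw [hCT, hC, circulant_mul]
  have hBm : ((circulantR x)ᵀ * circulantR x) ^ (k + 1) = circulant (upow u k) := by
    rw [hB, circulant_upow]
  -- positivity of entries of upow u k
  have hupos : ∀ r : Fin n, 0 < upow u k r := by
    intro r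
    have := hpos r 0
    rw [hBm] at this
    simpa [circulant_apply] using this
  -- symbol values
  have habs1 : ‖t‖ = 1 := abs_eq_one t htn
  have hSu : ∀ s : ℂ, s ^ n = 1 →
      symbolR u s = (Complex.normSq (symbolR x s) : ℝ) := by
    intro s hs
    rw [hu, S_mulVec _ _ s hs, S_neg x s hs, Complex.mul_conj]
  have hSt : symbolR (upow u k) t = ((Complex.normSq (symbolR x t) ^ (k + 1) : ℝ) : ℂ) := by
    rw [S_upow u k t htn, hSu t htn]
    push_cast
    ring
  have h1n : (1 : ℂ) ^ n = 1 := one_pow n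
  have hS1 : symbolR (upow u k) 1 = ((Complex.normSq (symbolR x 1) ^ (k + 1) : ℝ) : ℂ) := by
    rw [S_upow u k 1 h1n, hSu 1 h1n]
    push_cast
    ring
  -- real parts
  have hre : ∀ (v : Fin n → ℝ) (s : ℂ),
      (symbolR v s).re = ∑ j : Fin n, v j * (s ^ (j : ℕ)).re := by
    intro v s
    unfold symbolR
    rw [Complex.re_sum]
    exact Finset.sum_congr rfl fun j _ => Complex.re_ofReal_mul _ _
  have hret : Complex.normSq (symbolR x t) ^ (k + 1)
      = ∑ j : Fin n, upow u k j * (t ^ (j : ℕ)).re := by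
    rw [← hre, hSt]
    exact (Complex.ofReal_re _).symm
  have hre1 : Complex.normSq (symbolR x 1) ^ (k + 1) = ∑ j : Fin n, upow u k j := by
    have h' := hre (upow u k) 1
    rw [hS1, Complex.ofReal_re] at h'
    simp only [one_pow, Complex.one_re, mul_one] at h'
    exact h'
  -- strict inequality on sums
  have hretle : ∀ j : Fin n, (t ^ (j : ℕ)).re ≤ 1 := by
    intro j
    calc (t ^ (j : ℕ)).re ≤ ‖t ^ (j : ℕ)‖ := Complex.re_le_norm _
      _ = 1 := by rw [norm_pow, habs1, one_pow]
  have hretlt : (t ^ (((1 : Fin n)) : ℕ)).re < 1 := by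
    have hv1 : ((1 : Fin n) : ℕ) = 1 := by
      simp [Fin.val_one', Nat.mod_eq_of_lt (by omega : 1 < n)]
    rw [hv1, pow_one]
    rcases lt_or_eq_of_le (hretle 1) with h' | h'
    · rw [(by simp [Fin.val_one', Nat.mod_eq_of_lt (by omega : 1 < n)] :
        (((1 : Fin n)) : ℕ) = 1), pow_one] at h'
      exact h'
    · exfalso
      have hv : (t ^ (((1 : Fin n)) : ℕ)) = t := by rw [hv1, pow_one]
      rw [hv] at h'
      have hnsq : Complex.normSq t = 1 := by
        rw [Complex.normSq_eq_norm_sq, habs1]; norm_num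
      have him : t.im = 0 := by
        have := Complex.normSq_apply t
        nlinarith [this, hnsq, h']
      exact ht1 (Complex.ext h' him)
  have hsum : ∑ j : Fin n, upow u k j * (t ^ (j : ℕ)).re < ∑ j : Fin n, upow u k j := by
    have : ∑ j : Fin n, upow u k j = ∑ j : Fin n, upow u k j * 1 := by simp
    rw [this]
    refine Finset.sum_lt_sum (fun j _ => ?_) ⟨1, Finset.mem_univ _, ?_⟩
    · exact mul_le_mul_of_nonneg_left (hretle j) (hupos j).le
    · exact mul_lt_mul_of_pos_left hretlt (hupos 1)
  have hkey : Complex.normSq (symbolR x t) ^ (k + 1)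
      < Complex.normSq (symbolR x 1) ^ (k + 1) := by
    rw [hret, hre1]; exact hsum
  -- conclude
  by_contra hcon
  push_neg at hcon
  have h2 : Complex.normSq (symbolR x 1) ≤ Complex.normSq (symbolR x t) := by
    rw [Complex.normSq_eq_norm_sq, Complex.normSq_eq_norm_sq]
    exact pow_le_pow_left₀ (norm_nonneg _) hcon 2
  have h3 := pow_le_pow_left₀ (Complex.normSq_nonneg _) h2 (k + 1)
  linarith
end

section
/- Let n ≥ 2, x ∈ ℝⁿ, and let B_x := C_xᵀ C_x. If for every n-th root of unity t ≠ 1 one has |c(t)| < |c(1)| (where c(t) = x_0 + x_1 t + ⋯ + x_{n-1} t^{n-1}), then there exists m₀ ∈ ℕ such that for all m ≥ m₀ every entry of B_xᵐ is strictly positive. -/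
open Matrix

open Finset
open Fin.CommRing

noncomputable def zet (n : ℕ) : ℂ := Complex.exp (2 * Real.pi * Complex.I / n)

noncomputable def chi (n : ℕ) (a : Fin n) : ℂ := zet n ^ (a : ℕ)

lemma zet_pow_n {n : ℕ} (hn : 0 < n) : zet n ^ n = 1 :=
  (Complex.isPrimitiveRoot_exp n hn.ne').pow_eq_one

lemma zet_pow_mod {n : ℕ} (hn : 0 < n) (m : ℕ) : zet n ^ m = zet n ^ (m % n) := by
  conv_lhs => rw [← Nat.div_add_mod m n]
  rw [pow_add, pow_mul, zet_pow_n hn, one_pow, one_mul]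

lemma chi_add {n : ℕ} (hn : 0 < n) (a b : Fin n) : chi n (a + b) = chi n a * chi n b := by
  unfold chi
  rw [Fin.val_add, ← zet_pow_mod hn, pow_add]

lemma chi_mul_pow {n : ℕ} (hn : 0 < n) (a b : Fin n) : chi n (a * b) = chi n a ^ (b : ℕ) := by
  unfold chi
  rw [Fin.val_mul, ← zet_pow_mod hn, pow_mul]

lemma chi_zero {n : ℕ} [NeZero n] : chi n 0 = 1 := by simp [chi]

lemma chi_pow_n {n : ℕ} (hn : 0 < n) (a : Fin n) : chi n a ^ n = 1 := by
  unfold chi; rw [← pow_mul, mul_comm, pow_mul, zet_pow_n hn, one_pow]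

lemma chi_ne_one {n : ℕ} [NeZero n] (hn : 0 < n) {a : Fin n} (ha : a ≠ 0) : chi n a ≠ 1 :=
  (Complex.isPrimitiveRoot_exp n hn.ne').pow_ne_one_of_pos_of_lt
    (Fin.val_ne_zero_iff.mpr ha) a.isLt

lemma sum_chi {n : ℕ} [NeZero n] (hn : 0 < n) (d : Fin n) :
    ∑ l : Fin n, chi n (l * d) = if d = 0 then (n : ℂ) else 0 := by
  by_cases hd : d = 0
  · simp [hd, chi_zero]
  · simp only [hd, if_false]
    have h1 : ∀ l : Fin n, chi n (l * d) = chi n d ^ (l : ℕ) := fun l => by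
      rw [mul_comm, chi_mul_pow hn]
    simp only [h1]
    rw [Fin.sum_univ_eq_sum_range (fun i => chi n d ^ i),
      geom_sum_eq (chi_ne_one hn hd), chi_pow_n hn, sub_self, zero_div]


lemma B_entry {n : ℕ} [NeZero n] (x : Fin n → ℝ) (j k : Fin n) :
    ((((circulantR x)ᵀ * circulantR x) j k : ℝ) : ℂ)
      = (n:ℂ)⁻¹ * ∑ l, (symbolR x (chi n l) * symbolR x (chi n (-l))) * chi n ((k - j) * l) := by
  have hn : 0 < n := Nat.pos_of_ne_zero (NeZero.ne n)
  have hterm : ∀ l a b : Fin n,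
      ((x a : ℂ) * chi n l ^ (a:ℕ)) * ((x b : ℂ) * chi n (-l) ^ (b:ℕ)) * chi n ((k - j) * l)
      = ((x a : ℂ) * x b) * chi n (l * (a - b + k - j)) := by
    intro l a b
    have h1 : chi n (l * (a - b + k - j)) = chi n (l*a) * (chi n ((-l)*b) * chi n ((k-j)*l)) := by
      rw [← chi_add hn, ← chi_add hn]; congr 1; ring
    rw [h1, chi_mul_pow hn (-l) b, chi_mul_pow hn l a, chi_mul_pow hn (k-j) l]; ring
  have hR : (n:ℂ)⁻¹ * ∑ l, (symbolR x (chi n l) * symbolR x (chi n (-l))) * chi n ((k - j) * l)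
      = ∑ a, (x a : ℂ) * x (a + k - j) := by
    have h2 : ∀ l : Fin n, (symbolR x (chi n l) * symbolR x (chi n (-l))) * chi n ((k-j)*l)
        = ∑ a, ∑ b, ((x a:ℂ) * x b) * chi n (l * (a - b + k - j)) := by
      intro l
      unfold symbolR
      rw [Finset.sum_mul_sum, Finset.sum_mul]
      refine Finset.sum_congr rfl fun a _ => ?_
      rw [Finset.sum_mul]
      exact Finset.sum_congr rfl fun b _ => hterm l a b
    rw [Finset.sum_congr rfl fun l _ => h2 l, Finset.sum_comm]
    have h3 : ∀ a : Fin n, ∑ l : Fin n, ∑ b : Fin n, ((x a:ℂ) * x b) * chi n (l * (a - b + k - j))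
        = (x a : ℂ) * x (a + k - j) * n := by
      intro a
      rw [Finset.sum_comm]
      have h4 : ∀ b : Fin n, ∑ l : Fin n, ((x a:ℂ) * x b) * chi n (l * (a - b + k - j))
          = if (a + k - j) = b then ((x a:ℂ) * x b) * n else 0 := by
        intro b
        rw [← Finset.mul_sum, sum_chi hn]
        have hc : (a - b + k - j = 0) = ((a + k - j) = b) := by
          have : a - b + k - j = (a + k - j) - b := by ring
          rw [this, sub_eq_zero]
        simp only [hc, mul_ite, mul_zero]
      rw [Finset.sum_congr rfl fun b _ => h4 b, Finset.sum_ite_eq]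
      simp
    rw [Finset.sum_congr rfl fun a _ => h3 a, ← Finset.sum_mul]
    have hne : (n:ℂ) ≠ 0 := Nat.cast_ne_zero.mpr (NeZero.ne n)
    field_simp
  have hL : ((((circulantR x)ᵀ * circulantR x) j k : ℝ) : ℂ)
      = ∑ a, (x a : ℂ) * x (a + k - j) := by
    rw [Matrix.mul_apply]
    push_cast
    simp only [circulantR, transpose_apply, Matrix.of_apply]
    refine Fintype.sum_equiv (Equiv.subLeft j) _ _ fun r => ?_
    simp only [Equiv.subLeft_apply]
    rw [show (j - r) + k - j = k - r from by ring]
  rw [hL]; exact hR.symm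


lemma chi_inner_sum {n : ℕ} [NeZero n] (j k l q : Fin n) :
    ∑ p : Fin n, chi n ((p - j) * l) * chi n ((k - p) * q)
      = if q = l then (n:ℂ) * chi n ((k - j) * l) else 0 := by
  have hn : 0 < n := Nat.pos_of_ne_zero (NeZero.ne n)
  have h1 : ∀ p : Fin n, chi n ((p-j)*l) * chi n ((k-p)*q)
      = chi n (p * (l - q)) * chi n (k*q - j*l) := by
    intro p; rw [← chi_add hn, ← chi_add hn]; congr 1; ring
  rw [Finset.sum_congr rfl fun p _ => h1 p, ← Finset.sum_mul, sum_chi hn]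
  have hc : (l - q = 0) = (q = l) := by
    rw [sub_eq_zero]; apply propext; exact eq_comm
  simp only [hc, ite_mul, zero_mul]
  by_cases hq : q = l
  · simp only [hq, if_true]
    congr 1
    subst hq
    congr 1
    ring
  · simp [hq]

lemma B_pow_entry {n : ℕ} [NeZero n] (x : Fin n → ℝ) (m : ℕ) :
    ∀ j k : Fin n, (((((circulantR x)ᵀ * circulantR x)) ^ m) j k : ℂ) =
      (n:ℂ)⁻¹ * ∑ l, (symbolR x (chi n l) * symbolR x (chi n (-l)))^m * chi n ((k - j) * l) := by
  have hn : 0 < n := Nat.pos_of_ne_zero (NeZero.ne n)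
  have hne : (n:ℂ) ≠ 0 := Nat.cast_ne_zero.mpr (NeZero.ne n)
  induction m with
  | zero =>
    intro j k
    simp only [pow_zero, Matrix.one_apply, pow_zero, one_mul]
    have h1 : ∀ l : Fin n, chi n ((k - j) * l) = chi n (l * (k - j)) := fun l => by rw [mul_comm]
    rw [Finset.sum_congr rfl fun l _ => h1 l, sum_chi hn]
    by_cases hjk : j = k
    · simp [hjk, hne]
    · have : ¬ (k - j = 0) := fun hc => hjk (by rw [sub_eq_zero] at hc; exact hc.symm)
      simp [hjk, this]
  | succ m IH =>
    intro j k
    rw [pow_succ, Matrix.mul_apply]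
    push_cast
    have hterm : ∀ p : Fin n,
        ((((circulantR x)ᵀ * circulantR x) ^ m) j p : ℂ) * (((circulantR x)ᵀ * circulantR x) p k : ℂ)
        = (n:ℂ)⁻¹ * (n:ℂ)⁻¹ * ∑ l, ∑ q,
            ((symbolR x (chi n l) * symbolR x (chi n (-l)))^m * (symbolR x (chi n q) * symbolR x (chi n (-q))))
              * (chi n ((p - j) * l) * chi n ((k - p) * q)) := by
      intro p
      rw [IH j p, B_entry x p k, mul_mul_mul_comm, Finset.sum_mul_sum]
      congr 1
      refine Finset.sum_congr rfl fun l _ => Finset.sum_congr rfl fun q _ => by ring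
    rw [Finset.sum_congr rfl fun p _ => hterm p, ← Finset.mul_sum]
    rw [Finset.sum_comm]
    have h2 : ∀ l : Fin n, ∑ p : Fin n, ∑ q : Fin n,
        ((symbolR x (chi n l) * symbolR x (chi n (-l)))^m * (symbolR x (chi n q) * symbolR x (chi n (-q))))
          * (chi n ((p - j) * l) * chi n ((k - p) * q))
        = (symbolR x (chi n l) * symbolR x (chi n (-l)))^(m+1) * ((n:ℂ) * chi n ((k - j) * l)) := by
      intro l
      rw [Finset.sum_comm]
      have h3 : ∀ q : Fin n, ∑ p : Fin n,
          ((symbolR x (chi n l) * symbolR x (chi n (-l)))^m * (symbolR x (chi n q) * symbolR x (chi n (-q))))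
            * (chi n ((p - j) * l) * chi n ((k - p) * q))
          = if q = l then
              ((symbolR x (chi n l) * symbolR x (chi n (-l)))^m * (symbolR x (chi n q) * symbolR x (chi n (-q))))
                * ((n:ℂ) * chi n ((k - j) * l)) else 0 := by
        intro q
        rw [← Finset.mul_sum, chi_inner_sum j k l q, mul_ite, mul_zero]
      rw [Finset.sum_congr rfl fun q _ => h3 q, Finset.sum_ite_eq' univ l]
      simp only [Finset.mem_univ, if_true]
      ring
    rw [Finset.sum_congr rfl fun l _ => h2 l]
    rw [show ∀ S : ℂ, (n:ℂ)⁻¹ * (n:ℂ)⁻¹ * S = (n:ℂ)⁻¹ * ((n:ℂ)⁻¹ * S) from fun S => by ring]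
    congr 1
    rw [Finset.mul_sum]
    exact Finset.sum_congr rfl fun l _ => by field_simp


lemma abs_chi {n : ℕ} (a : Fin n) : ‖chi n a‖ = 1 := by
  have hz : ‖zet n‖ = 1 := by
    have : (2 * (Real.pi:ℂ) * Complex.I / (n:ℕ) : ℂ) = ((2 * Real.pi / (n:ℕ) : ℝ) : ℂ) * Complex.I := by
      push_cast; ring
    rw [zet, this, Complex.norm_exp_ofReal_mul_I]
  rw [chi, norm_pow, hz, one_pow]

lemma chi_ne_zero {n : ℕ} (a : Fin n) : chi n a ≠ 0 := by
  intro hc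
  have := abs_chi a
  rw [hc] at this
  simp at this

lemma conj_chi {n : ℕ} [NeZero n] (a : Fin n) : (starRingEnd ℂ) (chi n a) = chi n (-a) := by
  have hn : 0 < n := Nat.pos_of_ne_zero (NeZero.ne n)
  have h1 : chi n a * chi n (-a) = 1 := by
    rw [← chi_add hn, add_neg_cancel, chi_zero]
  have h2 : chi n a * (starRingEnd ℂ) (chi n a) = 1 := by
    rw [Complex.mul_conj, Complex.normSq_eq_norm_sq, abs_chi]
    norm_num
  exact mul_left_cancel₀ (chi_ne_zero a) (h2.trans h1.symm)

lemma symbol_conj {n : ℕ} (x : Fin n → ℝ) (t : ℂ) :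
    (starRingEnd ℂ) (symbolR x t) = symbolR x ((starRingEnd ℂ) t) := by
  simp [symbolR, map_sum, _root_.map_mul, map_pow, Complex.conj_ofReal]

lemma nu_eq {n : ℕ} [NeZero n] (x : Fin n → ℝ) (l : Fin n) :
    symbolR x (chi n l) * symbolR x (chi n (-l))
      = ((‖symbolR x (chi n l)‖ ^ 2 : ℝ) : ℂ) := by
  rw [← conj_chi, ← symbol_conj, Complex.mul_conj, Complex.normSq_eq_norm_sq]


theorem stmt9 (n : ℕ) (hn : 2 ≤ n) (x : Fin n → ℝ)
    (h : ∀ t : ℂ, t ^ n = 1 → t ≠ 1 →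
      ‖symbolR x t‖ < ‖symbolR x 1‖) :
    ∃ m₀ : ℕ, ∀ m ≥ m₀, ∀ j k, 0 < (((circulantR x)ᵀ * circulantR x) ^ m) j k := by
  haveI : NeZero n := ⟨by omega⟩
  have hn0 : 0 < n := by omega
  set B := (circulantR x)ᵀ * circulantR x with hB
  set μ : Fin n → ℝ := fun l => ‖symbolR x (chi n l)‖ ^ 2 with hμ
  have hpow : ∀ m (j k : Fin n), ((B ^ m) j k : ℂ)
      = (n:ℂ)⁻¹ * ∑ l, ((μ l : ℝ) : ℂ)^m * chi n ((k - j) * l) := by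
    intro m j k
    rw [hB, B_pow_entry x m j k]
    congr 1
    exact Finset.sum_congr rfl fun l _ => by rw [nu_eq]
  have hμnn : ∀ l, 0 ≤ μ l := fun l => sq_nonneg _
  have hμ0 : ∀ l : Fin n, l ≠ 0 → μ l < μ 0 := by
    intro l hl
    have h1 : ‖symbolR x (chi n l)‖ < ‖symbolR x 1‖ :=
      h _ (chi_pow_n hn0 l) (chi_ne_one hn0 hl)
    have h2 : symbolR x (chi n 0) = symbolR x 1 := by rw [chi_zero]
    simp only [hμ, h2]
    exact pow_lt_pow_left₀ h1 (norm_nonneg _) (by norm_num)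
  have h10 : (1 : Fin n) ≠ 0 := by
    simp [Fin.ext_iff, Fin.val_one', Nat.mod_eq_of_lt (show 1 < n by omega)]
  set s : Finset (Fin n) := Finset.univ.erase 0 with hs
  have h1mem : (1 : Fin n) ∈ s := Finset.mem_erase.mpr ⟨h10, Finset.mem_univ _⟩
  have hsne : s.Nonempty := ⟨1, h1mem⟩
  set ρ := s.sup' hsne μ with hρ
  have hρlt : ρ < μ 0 :=
    (Finset.sup'_lt_iff hsne).mpr fun l hl => hμ0 l (Finset.ne_of_mem_erase hl)
  have hρnn : 0 ≤ ρ := le_trans (hμnn 1) (Finset.le_sup' μ h1mem)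
  have hμ0pos : 0 < μ 0 := lt_of_le_of_lt hρnn hρlt
  have htend : Filter.Tendsto (fun m => (n - 1 : ℝ) * (ρ / μ 0)^m) Filter.atTop (nhds 0) := by
    have h1 := tendsto_pow_atTop_nhds_zero_of_lt_one (div_nonneg hρnn hμ0pos.le)
      ((div_lt_one hμ0pos).mpr hρlt)
    simpa using h1.const_mul (n - 1 : ℝ)
  have hev : ∀ᶠ m in Filter.atTop, (n - 1 : ℝ) * (ρ / μ 0)^m < 1 :=
    htend.eventually_lt_const (by norm_num)
  obtain ⟨m₀, hm₀⟩ := Filter.eventually_atTop.mp hev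
  refine ⟨m₀, fun m hm j k => ?_⟩
  have hμ0m : (0:ℝ) < μ 0 ^ m := pow_pos hμ0pos m
  have hmain : (n - 1 : ℝ) * ρ ^ m < μ 0 ^ m := by
    have h1 := hm₀ m hm
    have h2 : ρ ^ m = (ρ / μ 0)^m * μ 0 ^ m := by
      rw [div_pow, div_mul_cancel₀]
      exact hμ0m.ne'
    calc (n - 1 : ℝ) * ρ ^ m = ((n - 1 : ℝ) * (ρ / μ 0)^m) * μ 0 ^ m := by rw [h2]; ring
    _ < 1 * μ 0 ^ m := by exact mul_lt_mul_of_pos_right h1 hμ0m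
    _ = μ 0 ^ m := one_mul _
  -- split the sum
  have hsplit : ∑ l, ((μ l : ℝ):ℂ)^m * chi n ((k - j) * l)
      = ((μ 0 : ℝ):ℂ)^m + ∑ l ∈ s, ((μ l:ℝ):ℂ)^m * chi n ((k - j) * l) := by
    have h0 : ((μ 0:ℝ):ℂ)^m * chi n ((k-j) * (0:Fin n)) = ((μ 0:ℝ):ℂ)^m := by
      rw [mul_zero, chi_zero, mul_one]
    rw [hs, ← Finset.add_sum_erase Finset.univ
      (fun l => ((μ l:ℝ):ℂ)^m * chi n ((k - j) * l)) (Finset.mem_univ (0:Fin n)), h0]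
  have htail : ‖∑ l ∈ s, ((μ l:ℝ):ℂ)^m * chi n ((k - j) * l)‖ ≤ (n-1 : ℝ) * ρ^m := by
    calc ‖∑ l ∈ s, ((μ l:ℝ):ℂ)^m * chi n ((k - j) * l)‖
        ≤ ∑ l ∈ s, ‖((μ l:ℝ):ℂ)^m * chi n ((k - j) * l)‖ :=
          norm_sum_le _ _
      _ = ∑ l ∈ s, μ l ^ m := by
          refine Finset.sum_congr rfl fun l hl => ?_
          rw [norm_mul, norm_pow, abs_chi, mul_one, Complex.norm_of_nonneg (hμnn l)]
      _ ≤ s.card • ρ ^ m := Finset.sum_le_card_nsmul _ _ _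
          (fun l hl => pow_le_pow_left₀ (hμnn l) (Finset.le_sup' μ hl) m)
      _ = (n - 1 : ℝ) * ρ ^ m := by
          rw [nsmul_eq_mul, hs, Finset.card_erase_of_mem (Finset.mem_univ _), Finset.card_univ,
            Fintype.card_fin]
          congr 1
          push_cast [Nat.cast_sub (by omega : 1 ≤ n)]
          ring
  have hdiff : ((B^m) j k : ℂ) - ((μ 0 ^ m / n : ℝ) : ℂ)
      = (n:ℂ)⁻¹ * ∑ l ∈ s, ((μ l:ℝ):ℂ)^m * chi n ((k - j) * l) := by
    rw [hpow m j k, hsplit, mul_add]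
    have h3 : ((μ 0 ^ m / n : ℝ) : ℂ) = (n:ℂ)⁻¹ * ((μ 0:ℝ):ℂ)^m := by push_cast; ring
    rw [h3]
    ring
  have habs : |(B^m) j k - μ 0 ^ m / n| ≤ (n-1:ℝ) * ρ^m / n := by
    have h4 := congrArg (‖·‖) hdiff
    rw [← Complex.ofReal_sub, Complex.norm_real, Real.norm_eq_abs, norm_mul, norm_inv, Complex.norm_natCast] at h4
    rw [h4, div_eq_inv_mul]
    exact mul_le_mul_of_nonneg_left htail (by positivity)
  have hlt : (n-1:ℝ) * ρ^m / n < μ 0 ^ m / n := by gcongr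
  have hfin := abs_lt.mp (lt_of_le_of_lt habs hlt)
  have := hfin.1
  linarith
end

section
/- Let n ≥ 2, x ∈ ℝⁿ with x ≠ 0, and let B_x := C_xᵀ C_x. If for every n-th root of unity t ≠ 1 one has |c(t)| < |c(1)| (where c(t) = x_0 + x_1 t + ⋯ + x_{n-1} t^{n-1}), then the normalized powers B_xᵐ / ‖B_xᵐ‖ converge, as m → ∞, to the n×n matrix all of whose entries equal 1/n. -/
open Matrix Filter

set_option maxHeartbeats 1000000
set_option synthInstance.maxHeartbeats 400000
set_option linter.unusedSectionVars false
set_option linter.unusedVariables false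

open scoped Matrix.Norms.L2Operator in
lemma specNormR_eq {n : ℕ} (M : Matrix (Fin n) (Fin n) ℝ) : specNormR M = ‖M‖ := rfl

open scoped Matrix.Norms.L2Operator in
lemma specNormR_J {n : ℕ} (hn : 2 ≤ n) :
    specNormR (Matrix.of fun _ _ : Fin n => (1 : ℝ) / n) = 1 := by
  set J : Matrix (Fin n) (Fin n) ℝ := Matrix.of fun _ _ : Fin n => (1 : ℝ) / n with hJ
  have hnn : (0:ℝ) < n := by positivity
  have hJJ : Jᴴ * J = J := by
    ext i j
    simp [hJ, Matrix.mul_apply, Matrix.conjTranspose_apply, Finset.sum_const, div_mul_div_comm]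
    field_simp
  have hsq : ‖J‖ = ‖J‖ * ‖J‖ := by
    conv_lhs => rw [← hJJ]
    exact Matrix.l2_opNorm_conjTranspose_mul_self J
  have hJ0 : J ≠ 0 := by
    intro h0
    have h1 : J ⟨0, by omega⟩ ⟨0, by omega⟩ = 0 := by rw [h0]; rfl
    have h2 : J ⟨0, by omega⟩ ⟨0, by omega⟩ = 1/n := rfl
    rw [h2] at h1
    have : (0:ℝ) < 1/n := by positivity
    linarith
  have hpos : 0 < ‖J‖ := norm_pos_iff.mpr hJ0
  rw [specNormR_eq]
  nlinarith [hsq, hpos]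

open scoped Matrix.Norms.L2Operator in
lemma specNormR_cont {n : ℕ} : Continuous (specNormR (n := n)) := by
  exact continuous_norm

open scoped Matrix.Norms.L2Operator in
lemma specNormR_smul {n : ℕ} (c : ℝ) (hc : 0 ≤ c) (M : Matrix (Fin n) (Fin n) ℝ) :
    specNormR (c • M) = c * specNormR M := by
  simp only [specNormR_eq]
  rw [norm_smul, Real.norm_eq_abs, abs_of_nonneg hc]

section roots
variable {n : ℕ} {ζ : ℂ}

lemma pow_mod_eq (hζ : ζ ^ n = 1) (a : ℕ) : ζ ^ (a % n) = ζ ^ a := by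
  conv_rhs => rw [← Nat.div_add_mod a n]
  rw [pow_add, pow_mul, hζ, one_pow, one_mul]

lemma pow_congr_mod (hζ : ζ ^ n = 1) {a b : ℕ} (hab : a % n = b % n) : ζ ^ a = ζ ^ b := by
  rw [← pow_mod_eq hζ a, ← pow_mod_eq hζ b, hab]

end roots

section fin
variable {n : ℕ} [NeZero n] {ζ : ℂ}

noncomputable def efun (ζ : ℂ) (a b : Fin n) : ℂ := ζ ^ ((a : ℕ) * (b : ℕ))

lemma efun_comm (a b : Fin n) : efun ζ a b = efun ζ b a := by
  rw [efun, efun, Nat.mul_comm]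

lemma efun_add_right (hζ : ζ ^ n = 1) (l j i : Fin n) :
    efun ζ l (j + i) = efun ζ l j * efun ζ l i := by
  rw [efun, efun, efun, ← pow_add, ← Nat.mul_add]
  refine pow_congr_mod hζ ?_
  rw [Fin.val_add]
  exact Nat.ModEq.mul_left _ (Nat.mod_modEq _ _)

lemma efun_neg_mul (hζ : ζ ^ n = 1) (l i : Fin n) :
    efun ζ l (-i) * efun ζ l i = 1 := by
  have := (efun_add_right hζ l (-i) i).symm
  rw [neg_add_cancel] at this
  rw [this, efun]
  simp

lemma efun_zero_right (l : Fin n) : efun ζ l 0 = 1 := by simp [efun]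

lemma efun_inv (hζ : ζ ^ n = 1) (l i : Fin n) : efun ζ l (-i) = (efun ζ l i)⁻¹ :=
  eq_inv_of_mul_eq_one_left (efun_neg_mul hζ l i)

lemma efun_conj (hζ : ζ ^ n = 1) (habs : ‖ζ‖ = 1) (l i : Fin n) :
    (starRingEnd ℂ) (efun ζ l i) = (efun ζ l i)⁻¹ := by
  rw [efun, map_pow, ← inv_pow]
  congr 1
  exact ((Complex.inv_eq_conj habs).symm)

end fin

section eig
variable {n : ℕ} [NeZero n] {ζ : ℂ} (x : Fin n → ℝ)

lemma symbolR_eq_sum_efun (l : Fin n) :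
    symbolR x (ζ ^ (l : ℕ)) = ∑ i : Fin n, (x i : ℂ) * efun ζ l i := by
  rw [symbolR]
  exact Finset.sum_congr rfl fun i _ => by rw [efun, ← pow_mul]

lemma mulvec_Cc (hζ : ζ ^ n = 1) (l : Fin n) :
    ((circulantR x).map Complex.ofReal) *ᵥ (fun k => efun ζ l k) =
      symbolR x (ζ ^ (l : ℕ)) • (fun k => efun ζ l k) := by
  funext j
  show ∑ k : Fin n, ((circulantR x).map Complex.ofReal) j k * efun ζ l k = _
  rw [← Equiv.sum_comp (Equiv.addLeft j) (fun k => ((circulantR x).map Complex.ofReal) j k * efun ζ l k)]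
  have step : ∀ i : Fin n,
      ((circulantR x).map Complex.ofReal) j ((Equiv.addLeft j) i) * efun ζ l ((Equiv.addLeft j) i)
      = efun ζ l j * ((x i : ℂ) * efun ζ l i) := by
    intro i
    simp only [Equiv.coe_addLeft]
    rw [efun_add_right hζ l j i]
    simp only [circulantR, Matrix.map_apply, Matrix.of_apply, add_sub_cancel_left]
    ring
  rw [Finset.sum_congr rfl fun i _ => step i, ← Finset.mul_sum,
    symbolR_eq_sum_efun x l]
  show efun ζ l j * _ = _ * efun ζ l j
  ring

lemma mulvec_CcT (hζ : ζ ^ n = 1) (habs : ‖ζ‖ = 1) (l : Fin n) :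
    (((circulantR x)ᵀ).map Complex.ofReal) *ᵥ (fun k => efun ζ l k) =
      (starRingEnd ℂ) (symbolR x (ζ ^ (l : ℕ))) • (fun k => efun ζ l k) := by
  funext j
  show ∑ k : Fin n, (((circulantR x)ᵀ).map Complex.ofReal) j k * efun ζ l k = _
  rw [← Equiv.sum_comp (Equiv.addLeft j) (fun k => (((circulantR x)ᵀ).map Complex.ofReal) j k * efun ζ l k)]
  have step : ∀ i : Fin n,
      (((circulantR x)ᵀ).map Complex.ofReal) j ((Equiv.addLeft j) i) * efun ζ l ((Equiv.addLeft j) i)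
      = efun ζ l j * ((x (-i) : ℂ) * efun ζ l i) := by
    intro i
    simp only [Equiv.coe_addLeft]
    rw [efun_add_right hζ l j i]
    simp only [circulantR, Matrix.map_apply, Matrix.of_apply, Matrix.transpose_apply,
      sub_add_cancel_left]
    ring
  rw [Finset.sum_congr rfl fun i _ => step i, ← Finset.mul_sum]
  rw [← Equiv.sum_comp (Equiv.neg (Fin n)) (fun i => (x (-i) : ℂ) * efun ζ l i)]
  have step2 : ∀ i : Fin n, (x (-(Equiv.neg (Fin n) i)) : ℂ) * efun ζ l ((Equiv.neg (Fin n)) i)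
      = (x i : ℂ) * (starRingEnd ℂ) (efun ζ l i) := by
    intro i
    simp only [Equiv.neg_apply, neg_neg]
    rw [efun_inv hζ l i, efun_conj hζ habs l i]
  rw [Finset.sum_congr rfl fun i _ => step2 i]
  have : ∑ i : Fin n, (x i : ℂ) * (starRingEnd ℂ) (efun ζ l i)
      = (starRingEnd ℂ) (symbolR x (ζ ^ (l : ℕ))) := by
    rw [symbolR_eq_sum_efun x l, map_sum]
    exact Finset.sum_congr rfl fun i _ => by rw [RingHom.map_mul, Complex.conj_ofReal]
  rw [this]
  show efun ζ l j * _ = _ * efun ζ l j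
  ring

lemma mulvec_Bc (hζ : ζ ^ n = 1) (habs : ‖ζ‖ = 1) (l : Fin n) :
    (((circulantR x)ᵀ * circulantR x).map Complex.ofReal) *ᵥ (fun k => efun ζ l k) =
      ((‖symbolR x (ζ ^ (l : ℕ))‖ ^ 2 : ℝ) : ℂ) • (fun k => efun ζ l k) := by
  have hmap : (((circulantR x)ᵀ * circulantR x).map Complex.ofReal)
      = (((circulantR x)ᵀ).map Complex.ofReal) * ((circulantR x).map Complex.ofReal) := by
    exact Matrix.map_mul (f := Complex.ofRealHom)
  rw [hmap, ← Matrix.mulVec_mulVec, mulvec_Cc x hζ l, Matrix.mulVec_smul, mulvec_CcT x hζ habs l,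
    smul_smul]
  congr 1
  rw [Complex.mul_conj']
  norm_num

end eig

section ortho
variable {n : ℕ} [NeZero n] {ζ : ℂ}

lemma efun_ortho (hprim : IsPrimitiveRoot ζ n) (habs : ‖ζ‖ = 1) (j k : Fin n) :
    ∑ l : Fin n, efun ζ j l * (starRingEnd ℂ) (efun ζ k l)
      = if j = k then (n : ℂ) else 0 := by
  have hζ : ζ ^ n = 1 := hprim.pow_eq_one
  have hζ0 : ζ ≠ 0 := fun h0 => by simp [h0, zero_pow (NeZero.ne n)] at hζ
  set d : ℤ := ((j : ℕ) : ℤ) - ((k : ℕ) : ℤ) with hd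
  have hterm : ∀ l : Fin n, efun ζ j l * (starRingEnd ℂ) (efun ζ k l) = (ζ ^ d) ^ (l : ℕ) := by
    intro l
    rw [efun_conj hζ habs, efun, efun, ← zpow_natCast ζ, ← zpow_natCast ζ, ← _root_.zpow_neg,
      ← zpow_add₀ hζ0, ← zpow_natCast (ζ ^ d), ← _root_.zpow_mul]
    congr 1
    push_cast [hd]
    ring
  rw [Finset.sum_congr rfl fun l _ => hterm l]
  rw [Fin.sum_univ_eq_sum_range (fun i => (ζ ^ d) ^ i) n]
  by_cases hjk : j = k
  · subst hjk
    simp [hd]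
  · rw [if_neg hjk]
    have hw1 : ζ ^ d ≠ 1 := by
      intro h1
      have hdvd : (n : ℤ) ∣ d := (hprim.zpow_eq_one_iff_dvd d).mp h1
      have hj := j.isLt
      have hk := k.isLt
      have : d = 0 := Int.eq_zero_of_abs_lt_dvd hdvd (by
        have hj := j.isLt; have hk := k.isLt
        rw [hd]; rw [abs_lt]; omega)
      have : (j : ℕ) = (k : ℕ) := by omega
      exact hjk (Fin.ext this)
    rw [geom_sum_eq hw1 n]
    have hwn : (ζ ^ d) ^ n = 1 := by
      rw [← zpow_natCast (ζ ^ d), ← _root_.zpow_mul, mul_comm, _root_.zpow_mul, zpow_natCast, hζ, _root_.one_zpow]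
    rw [hwn]
    simp

end ortho

section diag
variable {n : ℕ} [NeZero n] {ζ : ℂ} (x : Fin n → ℝ)

noncomputable def rval (ζ : ℂ) (x : Fin n → ℝ) (l : Fin n) : ℝ :=
  ‖symbolR x (ζ ^ (l : ℕ))‖ ^ 2

lemma entry_formula (hprim : IsPrimitiveRoot ζ n) (habs : ‖ζ‖ = 1)
    (m : ℕ) (j k : Fin n) :
    ((((circulantR x)ᵀ * circulantR x) ^ m : Matrix (Fin n) (Fin n) ℝ) j k)
      = (n : ℝ)⁻¹ * ∑ l : Fin n,
          (rval ζ x l) ^ m * (efun ζ j l * (starRingEnd ℂ) (efun ζ l k)).re := by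
  have hζ : ζ ^ n = 1 := hprim.pow_eq_one
  have hn0 : (n : ℂ) ≠ 0 := Nat.cast_ne_zero.mpr (NeZero.ne n)
  set B : Matrix (Fin n) (Fin n) ℝ := (circulantR x)ᵀ * circulantR x with hB
  set Bc : Matrix (Fin n) (Fin n) ℂ := B.map Complex.ofReal with hBc
  set F : Matrix (Fin n) (Fin n) ℂ := Matrix.of fun j l => efun ζ j l with hF
  set G : Matrix (Fin n) (Fin n) ℂ := Matrix.of fun l k => (starRingEnd ℂ) (efun ζ l k) with hG
  set D : Matrix (Fin n) (Fin n) ℂ := Matrix.diagonal (fun l => ((rval ζ x l : ℝ) : ℂ)) with hD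
  -- F * G = n • 1
  have hFG : F * G = (n : ℂ) • 1 := by
    ext a b
    rw [Matrix.mul_apply]
    have : ∀ l : Fin n, F a l * G l b = efun ζ a l * (starRingEnd ℂ) (efun ζ b l) := by
      intro l
      simp only [hF, hG, Matrix.of_apply]
      rw [efun_comm l b]
    rw [Finset.sum_congr rfl fun l _ => this l, efun_ortho hprim habs a b]
    simp only [Matrix.smul_apply, Matrix.one_apply, smul_eq_mul]
    split <;> simp
  -- Bc * F = F * D
  have hBF : Bc * F = F * D := by
    ext a b
    rw [Matrix.mul_apply, Matrix.mul_diagonal]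
    have hv := congrFun (mulvec_Bc x hζ habs b) a
    simp only [Matrix.mulVec, dotProduct, Pi.smul_apply, smul_eq_mul] at hv
    have : ∀ l : Fin n, Bc a l * F l b = Bc a l * efun ζ b l := by
      intro l; simp only [hF, Matrix.of_apply]; rw [efun_comm l b]
    rw [Finset.sum_congr rfl fun l _ => this l]
    rw [hv]
    simp only [hF, hD, Matrix.of_apply]
    rw [efun_comm a b]
    rw [rval]
    ring
  have hpowF : ∀ m : ℕ, Bc ^ m * F = F * D ^ m := by
    intro m
    induction m with
    | zero => simp
    | succ m ih =>
      rw [pow_succ, pow_succ, mul_assoc, hBF, ← mul_assoc, ih, mul_assoc]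
  have hFGinv : F * ((n : ℂ)⁻¹ • G) = 1 := by
    rw [Matrix.mul_smul, hFG, smul_smul, inv_mul_cancel₀ hn0, one_smul]
  have hBm : Bc ^ m = (n : ℂ)⁻¹ • (F * D ^ m * G) := by
    calc Bc ^ m = Bc ^ m * (F * ((n : ℂ)⁻¹ • G)) := by rw [hFGinv, mul_one]
      _ = (Bc ^ m * F) * ((n : ℂ)⁻¹ • G) := by rw [mul_assoc]
      _ = (F * D ^ m) * ((n : ℂ)⁻¹ • G) := by rw [hpowF]
      _ = (n : ℂ)⁻¹ • (F * D ^ m * G) := by rw [Matrix.mul_smul]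
  -- entry extraction
  have hentry : (Bc ^ m) j k
      = (n : ℂ)⁻¹ * ∑ l : Fin n, ((rval ζ x l : ℝ) : ℂ) ^ m *
          (efun ζ j l * (starRingEnd ℂ) (efun ζ l k)) := by
    rw [hBm]
    simp only [Matrix.smul_apply, smul_eq_mul]
    congr 1
    rw [Matrix.mul_apply]
    refine Finset.sum_congr rfl fun l _ => ?_
    rw [hD, Matrix.diagonal_pow, Matrix.mul_diagonal]
    simp only [hF, hG, Matrix.of_apply, Pi.pow_apply]
    ring
  have hmap : (Bc ^ m) j k = (((B ^ m) j k : ℝ) : ℂ) := by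
    have : Bc ^ m = (B ^ m).map Complex.ofReal := by
      rw [hBc]
      have h1 : (B.map Complex.ofReal) = Complex.ofRealHom.mapMatrix B := rfl
      rw [h1, ← map_pow]
      rfl
    rw [this]; rfl
  have := hmap.symm.trans hentry
  have hre := congrArg Complex.re this
  rw [Complex.ofReal_re] at hre
  rw [hre]
  have : ((n : ℂ)⁻¹ * ∑ l : Fin n, ((rval ζ x l : ℝ) : ℂ) ^ m *
      (efun ζ j l * (starRingEnd ℂ) (efun ζ l k))).re
      = (n : ℝ)⁻¹ * ∑ l : Fin n,
          (rval ζ x l) ^ m * (efun ζ j l * (starRingEnd ℂ) (efun ζ l k)).re := by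
    rw [show ((n : ℂ))⁻¹ = (((n : ℝ)⁻¹ : ℝ) : ℂ) by push_cast; ring]
    rw [Complex.re_ofReal_mul]
    congr 1
    rw [Complex.re_sum]
    refine Finset.sum_congr rfl fun l _ => ?_
    rw [← Complex.ofReal_pow, Complex.re_ofReal_mul]
  rw [this]

end diag

section limit
variable {n : ℕ} [NeZero n] {ζ : ℂ} (x : Fin n → ℝ)

lemma tendsto_scaled (hprim : IsPrimitiveRoot ζ n) (habs : ‖ζ‖ = 1)
    (hlt : ∀ l : Fin n, l ≠ 0 → rval ζ x l < rval ζ x 0) (h0 : 0 < rval ζ x 0) :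
    Tendsto (fun m : ℕ => ((rval ζ x 0) ^ m)⁻¹ • ((circulantR x)ᵀ * circulantR x) ^ m)
      atTop (nhds (Matrix.of fun _ _ : Fin n => (1 : ℝ) / n)) := by
  refine tendsto_pi_nhds.mpr fun j => tendsto_pi_nhds.mpr fun k => ?_
  have hr0 : ∀ m : ℕ, (rval ζ x 0) ^ m ≠ 0 := fun m => pow_ne_zero m h0.ne'
  set c : Fin n → ℝ := fun l => (efun ζ j l * (starRingEnd ℂ) (efun ζ l k)).re with hc
  have heq : ∀ m : ℕ,
      (((rval ζ x 0) ^ m)⁻¹ • ((circulantR x)ᵀ * circulantR x) ^ m) j k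
      = (n : ℝ)⁻¹ * ∑ l : Fin n, (rval ζ x l / rval ζ x 0) ^ m * c l := by
    intro m
    have : (((rval ζ x 0) ^ m)⁻¹ • ((circulantR x)ᵀ * circulantR x) ^ m) j k
        = ((rval ζ x 0) ^ m)⁻¹ * (((circulantR x)ᵀ * circulantR x) ^ m) j k := rfl
    rw [this, entry_formula x hprim habs m j k]
    rw [← mul_assoc, mul_comm ((rval ζ x 0 ^ m)⁻¹) ((n:ℝ)⁻¹), mul_assoc]
    congr 1
    rw [Finset.mul_sum]
    refine Finset.sum_congr rfl fun l _ => ?_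
    rw [div_pow, div_eq_mul_inv]
    ring
  refine Tendsto.congr (fun m => (heq m).symm) ?_
  have hlim : Tendsto (fun m : ℕ => ∑ l : Fin n, (rval ζ x l / rval ζ x 0) ^ m * c l)
      atTop (nhds (∑ l : Fin n, if l = 0 then c l else 0)) := by
    refine tendsto_finset_sum _ fun l _ => ?_
    by_cases hl : l = 0
    · subst hl
      rw [if_pos rfl, div_self h0.ne']
      simp only [one_pow, one_mul]
      exact tendsto_const_nhds
    · rw [if_neg hl]
      have hq0 : 0 ≤ rval ζ x l / rval ζ x 0 := by
        apply div_nonneg _ h0.le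
        exact pow_two_nonneg _
      have hq1 : rval ζ x l / rval ζ x 0 < 1 := (div_lt_one h0).mpr (hlt l hl)
      have := (tendsto_pow_atTop_nhds_zero_of_lt_one hq0 hq1).mul_const (c l)
      simpa using this
  have hsum : (∑ l : Fin n, if l = 0 then c l else 0) = 1 := by
    rw [Finset.sum_ite_eq' Finset.univ (0 : Fin n) c]
    rw [if_pos (Finset.mem_univ _)]
    have h1 : efun ζ j 0 = 1 := efun_zero_right j
    have h2 : efun ζ (0 : Fin n) k = 1 := by rw [efun_comm]; exact efun_zero_right k
    simp [hc, h1, h2]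
  rw [hsum] at hlim
  have := hlim.const_mul ((n : ℝ)⁻¹)
  simpa [one_div] using this

end limit


theorem stmt10 (n : ℕ) (hn : 2 ≤ n) (x : Fin n → ℝ) (hx : x ≠ 0)
    (h : ∀ t : ℂ, t ^ n = 1 → t ≠ 1 →
      ‖symbolR x t‖ < ‖symbolR x 1‖) :
    Tendsto
      (fun m : ℕ =>
        (specNormR (((circulantR x)ᵀ * circulantR x) ^ m))⁻¹ •
          ((circulantR x)ᵀ * circulantR x) ^ m)
      atTop
      (nhds (Matrix.of fun _ _ : Fin n => (1 : ℝ) / n)) := by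
  haveI : NeZero n := ⟨by omega⟩
  set ζ : ℂ := Complex.exp (2 * Real.pi * Complex.I / n) with hζdef
  have hprim : IsPrimitiveRoot ζ n := Complex.isPrimitiveRoot_exp n (NeZero.ne n)
  have habs : ‖ζ‖ = 1 := by
    rw [hζdef, show (2 * (Real.pi:ℂ) * Complex.I / n) = ((2 * Real.pi / n : ℝ) : ℂ) * Complex.I by push_cast; ring]
    exact Complex.norm_exp_ofReal_mul_I _
  have hζ1 : (ζ : ℂ) ^ ((0 : Fin n) : ℕ) = 1 := by norm_num
  have hr0eq : rval ζ x 0 = ‖symbolR x 1‖ ^ 2 := by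
    rw [rval, hζ1]
  -- hlt
  have hlt : ∀ l : Fin n, l ≠ 0 → rval ζ x l < rval ζ x 0 := by
    intro l hl
    rw [rval, hr0eq]
    have ht1 : (ζ ^ (l : ℕ)) ^ n = 1 := by
      rw [← pow_mul, mul_comm, pow_mul, hprim.pow_eq_one, one_pow]
    have htne : ζ ^ (l : ℕ) ≠ 1 := by
      apply hprim.pow_ne_one_of_pos_of_lt
      · exact fun h0 => hl (Fin.ext h0)
      · exact l.isLt
    have := h (ζ ^ (l : ℕ)) ht1 htne
    exact pow_lt_pow_left₀ this (norm_nonneg _) (by norm_num)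
  have h0 : 0 < rval ζ x 0 := by
    rw [hr0eq]
    set l1 : Fin n := ⟨1, by omega⟩ with hl1
    have hne : l1 ≠ 0 := by
      intro h1
      have := congrArg Fin.val h1
      simp [hl1] at this
    have := hlt l1 hne
    rw [rval] at this
    nlinarith [norm_nonneg (symbolR x (ζ ^ (l1 : ℕ))), norm_nonneg (symbolR x 1)]
  set lam : ℝ := rval ζ x 0 with hlam
  set B : Matrix (Fin n) (Fin n) ℝ := (circulantR x)ᵀ * circulantR x with hB
  set J : Matrix (Fin n) (Fin n) ℝ := Matrix.of fun _ _ : Fin n => (1 : ℝ) / n with hJ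
  have key : Tendsto (fun m : ℕ => (lam ^ m)⁻¹ • B ^ m) atTop (nhds J) :=
    tendsto_scaled x hprim habs hlt h0
  have hnJ : specNormR J ≠ 0 := by rw [hJ, specNormR_J hn]; norm_num
  have hcont : ContinuousAt (fun M : Matrix (Fin n) (Fin n) ℝ => (specNormR M)⁻¹ • M) J :=
    ContinuousAt.smul (specNormR_cont.continuousAt.inv₀ hnJ) continuousAt_id
  have hcomp := hcont.tendsto.comp key
  have hval : (specNormR J)⁻¹ • J = J := by rw [hJ, specNormR_J hn]; simp
  rw [hval] at hcomp
  refine Tendsto.congr (fun m => ?_) hcomp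
  show (specNormR ((lam ^ m)⁻¹ • B ^ m))⁻¹ • ((lam ^ m)⁻¹ • B ^ m)
      = (specNormR (B ^ m))⁻¹ • B ^ m
  have hlp : (0:ℝ) < lam ^ m := pow_pos h0 m
  rw [specNormR_smul _ (inv_nonneg.mpr hlp.le), smul_smul]
  congr 1
  rw [mul_inv, inv_inv]
  rw [mul_comm (lam ^ m) ((specNormR (B ^ m))⁻¹), mul_assoc, mul_inv_cancel₀ hlp.ne', mul_one]
end

section
/- There exists x ∈ ℝ⁵ such that ‖C_x‖ = |x_0 + x_1 + x_2 + x_3 + x_4| but for every m ∈ ℕ, m ≥ 1, the matrix power (C_xᵀ C_x)ᵐ has at least one negative entry. (Concretely, one may take x = (3/5, α, β, β, α) with α = (1 + 2cos(4π/5))/5 < 0 and β = (1 + 2cos(2π/5))/5 > 0, for which C_x = C_xᵀ = C_xᵐ = (C_xᵀ C_x)ᵐ for all m ≥ 1.) -/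
open Matrix

noncomputable def xx : Fin 5 → ℝ :=
  ![3/5, (1-Real.sqrt 5)/10, (1+Real.sqrt 5)/10, (1+Real.sqrt 5)/10, (1-Real.sqrt 5)/10]

lemma hs2 : Real.sqrt 5 ^ 2 = 5 := Real.sq_sqrt (by norm_num)

lemma f1 : (-1 : Fin 5) = 4 := by decide
lemma f2 : (-2 : Fin 5) = 3 := by decide
lemma f3 : (-3 : Fin 5) = 2 := by decide
lemma f4 : (-4 : Fin 5) = 1 := by decide

lemma xx_symm : (circulantR xx)ᵀ = circulantR xx := by
  ext i j
  fin_cases i <;> fin_cases j <;> simp [circulantR, xx, f1, f2, f3, f4]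

set_option maxHeartbeats 2000000 in
lemma xx_idem : circulantR xx * circulantR xx = circulantR xx := by
  ext i j
  fin_cases i <;> fin_cases j <;>
    · simp [circulantR, xx, Matrix.mul_apply, Fin.sum_univ_five, f1, f2, f3, f4]
      nlinarith [hs2]

lemma xx_ne_zero : circulantR xx ≠ 0 := by
  intro h
  have h0 : circulantR xx 0 0 = 0 := by rw [h]; rfl
  simp [circulantR, xx] at h0

lemma sqrt5_gt_one : (1 : ℝ) < Real.sqrt 5 := by
  nlinarith [hs2, Real.sqrt_nonneg 5]

set_option synthInstance.maxHeartbeats 400000 in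
set_option maxHeartbeats 1000000 in
theorem stmt12 :
    ∃ x : Fin 5 → ℝ,
      specNormR (circulantR x) = |∑ k : Fin 5, x k| ∧
      ∀ m : ℕ, 1 ≤ m →
        ∃ j k, (((circulantR x)ᵀ * circulantR x) ^ m) j k < 0 := by
  refine ⟨xx, ?_, ?_⟩
  · have hsum : ∑ k : Fin 5, xx k = 1 := by
      simp [Fin.sum_univ_five, xx]; ring
    rw [hsum, abs_one]
    unfold specNormR
    -- spectral norm of a nonzero self-adjoint idempotent is 1
    set P := Matrix.toEuclideanCLM (𝕜 := ℝ) (circulantR xx) with hP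
    have hstar : star (circulantR xx) = circulantR xx := by
      rw [Matrix.star_eq_conjTranspose, Matrix.conjTranspose_eq_transpose_of_trivial, xx_symm]
    have hPP : star P * P = P := by
      rw [hP, ← map_star, ← _root_.map_mul, hstar, xx_idem]
    have hnorm : ‖P‖ * ‖P‖ = ‖P‖ := by
      rw [← CStarRing.norm_star_mul_self, hPP]
    have hne : P ≠ 0 := by
      intro h
      exact xx_ne_zero ((Matrix.toEuclideanCLM (𝕜 := ℝ)).injective
        (h.trans (map_zero (Matrix.toEuclideanCLM (𝕜 := ℝ))).symm))
    have hpos : ‖P‖ ≠ 0 := norm_ne_zero_iff.mpr hne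
    exact mul_left_cancel₀ hpos (by rw [hnorm, mul_one])
  · intro m hm
    refine ⟨0, 1, ?_⟩
    have hM : ((circulantR xx)ᵀ * circulantR xx) ^ m = circulantR xx := by
      rw [xx_symm, xx_idem]
      obtain ⟨k, rfl⟩ := Nat.exists_eq_add_of_le hm
      rw [add_comm]
      exact IsIdempotentElem.pow_succ_eq k xx_idem
    rw [hM]
    show xx ((1 : Fin 5) - 0) < 0
    norm_num [xx]
    nlinarith [sqrt5_gt_one]
end

section
/- Let n ≥ 2 and x = (x_0, …, x_{n-1}) ∈ ℂⁿ. Suppose there exists an index k with both x_k ≠ 0 and x_{(k+1) mod n} ≠ 0, and suppose every nonzero entry x_j satisfies |arg x_j| < π/(2n), where arg denotes the principal argument in (−π, π]. Then for every n-th root of unity t ≠ 1 one has |c(t)| < |c(1)|, where c(t) = x_0 + x_1 t + ⋯ + x_{n-1} t^{n-1}. -/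
open Complex

/-- The symbol `c(t) = x₀ + x₁ t + ⋯ + x_{n-1} t^{n-1}` of the circulant matrix `C_x`. -/
noncomputable def symbolC {n : ℕ} (x : Fin n → ℂ) (t : ℂ) : ℂ :=
  ∑ j : Fin n, x j * t ^ (j : ℕ)

private lemma coskey (n : ℕ) (hn : 2 ≤ n) (φ : ℝ) (hφ : |φ| < Real.pi / n) (k : ℕ)
    (hk1 : 1 ≤ k) (hk2 : k < n) :
    Real.cos (φ + 2 * Real.pi * k / n) < Real.cos φ := by
  have hπ := Real.pi_pos
  have hn0 : (0:ℝ) < n := by positivity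
  obtain ⟨hφ1, hφ2⟩ := abs_lt.mp hφ
  have hk1' : (1:ℝ) ≤ (k:ℝ) := by exact_mod_cast hk1
  have hk2' : (k:ℝ) ≤ (n:ℝ) - 1 := by
    have : (k:ℝ) + 1 ≤ n := by exact_mod_cast hk2
    linarith
  have hψ1 : 2 * Real.pi / n ≤ 2 * Real.pi * k / n := by
    apply div_le_div_of_nonneg_right ?_ hn0.le |>.trans_eq rfl
    nlinarith
  have hψ2 : 2 * Real.pi * k / n ≤ 2 * Real.pi - 2 * Real.pi / n := by
    have h1 : 2 * Real.pi * k / n ≤ 2 * Real.pi * ((n:ℝ) - 1) / n := by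
      apply div_le_div_of_nonneg_right ?_ hn0.le |>.trans_eq rfl
      nlinarith
    have h2 : 2 * Real.pi * ((n:ℝ) - 1) / n = 2 * Real.pi - 2 * Real.pi / n := by
      field_simp
    linarith
  set θ := φ + 2 * Real.pi * k / n with hθ
  have hθ1 : Real.pi / n < θ := by
    have : Real.pi / n ≤ 2 * Real.pi / n - Real.pi / n := by
      rw [div_sub_div_same]; apply div_le_div_of_nonneg_right ?_ hn0.le |>.trans_eq rfl; linarith
    linarith
  have hθ2 : θ < 2 * Real.pi - Real.pi / n := by
    have : Real.pi / n ≤ 2 * Real.pi / n - Real.pi / n := by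
      rw [div_sub_div_same]; apply div_le_div_of_nonneg_right ?_ hn0.le |>.trans_eq rfl; linarith
    linarith
  have habs : |φ| < Real.pi / n := hφ
  rcases le_or_gt θ Real.pi with h | h
  · have := Real.cos_lt_cos_of_nonneg_of_le_pi (abs_nonneg φ) h (lt_trans habs hθ1)
    rwa [Real.cos_abs] at this
  · have h1 : |φ| < 2 * Real.pi - θ := lt_of_lt_of_le habs (by linarith)
    have := Real.cos_lt_cos_of_nonneg_of_le_pi (abs_nonneg φ) (by linarith : 2 * Real.pi - θ ≤ Real.pi) h1
    rwa [Real.cos_two_pi_sub, Real.cos_abs] at this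

private lemma keyC {n : ℕ} (hn : 2 ≤ n) (a b u : ℂ) (ha : a ≠ 0) (hb : b ≠ 0)
    (ha' : |a.arg| < Real.pi / (2 * n)) (hb' : |b.arg| < Real.pi / (2 * n))
    (hu : u ^ n = 1) (hu1 : u ≠ 1) :
    (a * (starRingEnd ℂ) b * u).re < (a * (starRingEnd ℂ) b).re := by
  have hπ := Real.pi_pos
  have hn0 : (0:ℝ) < n := by positivity
  have : NeZero n := ⟨by omega⟩
  obtain ⟨k, hkn, hku⟩ := (Complex.isPrimitiveRoot_exp n (by omega)).eq_pow_of_pow_eq_one hu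
  have hk1 : 1 ≤ k := by
    rcases Nat.eq_zero_or_pos k with rfl | h
    · simp at hku; exact absurd hku.symm hu1
    · exact h
  have hu0 : u ≠ 0 := by
    intro h; rw [h] at hu; simp [zero_pow (by omega : n ≠ 0)] at hu
  have hargu : (u.arg : Real.Angle) = ((2 * Real.pi * k / n : ℝ) : Real.Angle) := by
    rw [← hku]
    have h1 : Complex.exp (2 * Real.pi * I / n) ^ k
        = Complex.exp (((2 * Real.pi * k / n : ℝ) : ℂ) * I) := by
      rw [← Complex.exp_nat_mul]; congr 1; push_cast; ring
    rw [h1, Complex.exp_mul_I, ← Complex.ofReal_cos, ← Complex.ofReal_sin]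
    have := Complex.arg_cos_add_sin_mul_I_coe_angle ((2 * Real.pi * k / n : ℝ) : Real.Angle)
    simpa [Real.Angle.cos_coe, Real.Angle.sin_coe] using this
  set c := a * (starRingEnd ℂ) b with hc_def
  have hbc : (starRingEnd ℂ) b ≠ 0 := by simpa using hb
  have hc : c ≠ 0 := mul_ne_zero ha hbc
  have hcu : c * u ≠ 0 := mul_ne_zero hc hu0
  have hbπ : b.arg ≠ Real.pi := by
    intro h
    rw [h, abs_of_pos hπ] at hb'
    have : Real.pi / (2 * n) ≤ Real.pi := by
      apply div_le_self hπ.le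
      have h2n : (2:ℝ) ≤ n := by exact_mod_cast hn
      linarith
    linarith
  have hargconj : ((starRingEnd ℂ) b).arg = - b.arg := by
    rw [Complex.arg_conj, if_neg hbπ]
  have hangle1 : (c.arg : Real.Angle) = ((a.arg - b.arg : ℝ) : Real.Angle) := by
    rw [hc_def, Complex.arg_mul_coe_angle ha hbc, hargconj, sub_eq_add_neg,
      Real.Angle.coe_add, Real.Angle.coe_neg]
  have hangle2 : ((c * u).arg : Real.Angle)
      = ((a.arg - b.arg + 2 * Real.pi * k / n : ℝ) : Real.Angle) := by
    rw [Complex.arg_mul_coe_angle hc hu0, hangle1, hargu, Real.Angle.coe_add]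
  have hcos1 : Real.cos c.arg = Real.cos (a.arg - b.arg) := by
    have := congrArg Real.Angle.cos hangle1
    simpa only [Real.Angle.cos_coe] using this
  have hcos2 : Real.cos (c * u).arg = Real.cos (a.arg - b.arg + 2 * Real.pi * k / n) := by
    have := congrArg Real.Angle.cos hangle2
    simpa only [Real.Angle.cos_coe] using this
  have habsu : ‖u‖ = 1 := Complex.norm_eq_one_of_pow_eq_one hu (by omega)
  have hφ : |a.arg - b.arg| < Real.pi / n := by
    have h1 : |a.arg - b.arg| ≤ |a.arg| + |b.arg| := abs_sub a.arg b.arg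
    have h2 : Real.pi / (2 * n) + Real.pi / (2 * n) = Real.pi / n := by
      field_simp; ring
    linarith
  have hkey := coskey n hn (a.arg - b.arg) hφ k hk1 hkn
  have hre1 : c.re = ‖c‖ * Real.cos c.arg := (Complex.norm_mul_cos_arg c).symm
  have hre2 : (c * u).re = ‖c‖ * Real.cos (c * u).arg := by
    rw [← Complex.norm_mul_cos_arg (c * u), norm_mul, habsu, mul_one]
  rw [hre1, hre2, hcos1, hcos2]
  exact mul_lt_mul_of_pos_left hkey (norm_pos_iff.mpr hc)

theorem stmt13 (n : ℕ) (hn : 2 ≤ n) (x : Fin n → ℂ)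
    (hadj : ∃ k : Fin n, x k ≠ 0 ∧ x (k + ⟨1, by omega⟩) ≠ 0)
    (harg : ∀ j, x j ≠ 0 → |Complex.arg (x j)| < Real.pi / (2 * n)) :
    ∀ t : ℂ, t ^ n = 1 → t ≠ 1 →
      ‖symbolC x t‖ < ‖symbolC x 1‖ := by
  obtain ⟨k, hk1, hk2⟩ := hadj
  intro t ht ht1
  have hn0 : n ≠ 0 := by omega
  have hconjn : ((starRingEnd ℂ) t) ^ n = 1 := by rw [← map_pow, ht, map_one]
  have habs_t : ‖t‖ = 1 := Complex.norm_eq_one_of_pow_eq_one ht hn0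
  have hconj : (starRingEnd ℂ) t = t ^ (n - 1) := by
    have h1 : (starRingEnd ℂ) t * t = 1 := by
      rw [mul_comm, Complex.mul_conj, Complex.normSq_eq_norm_sq, habs_t]; norm_num
    have h2 : t * t ^ (n - 1) = 1 := by
      rw [← pow_succ', show n - 1 + 1 = n from by omega]; exact ht
    calc (starRingEnd ℂ) t = (starRingEnd ℂ) t * (t * t ^ (n - 1)) := by rw [h2, mul_one]
      _ = ((starRingEnd ℂ) t * t) * t ^ (n - 1) := by ring
      _ = t ^ (n - 1) := by rw [h1, one_mul]
  have tpow_mod : ∀ m : ℕ, t ^ (m % n) = t ^ m := by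
    intro m
    conv_rhs => rw [← Nat.div_add_mod m n]
    rw [pow_add, pow_mul, ht, one_pow, one_mul]
  have expand : ∀ s : ℂ, Complex.normSq (symbolC x s) =
      ∑ p : Fin n × Fin n,
        (x p.1 * (starRingEnd ℂ) (x p.2) * (s ^ (p.1 : ℕ) * ((starRingEnd ℂ) s) ^ (p.2 : ℕ))).re := by
    intro s
    have hprod : (symbolC x s) * (starRingEnd ℂ) (symbolC x s)
        = ∑ p : Fin n × Fin n,
          x p.1 * (starRingEnd ℂ) (x p.2) * (s ^ (p.1 : ℕ) * ((starRingEnd ℂ) s) ^ (p.2 : ℕ)) := by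
      rw [symbolC, map_sum, Finset.sum_mul_sum, ← Fintype.sum_prod_type']
      apply Finset.sum_congr rfl
      intro p _
      rw [map_mul, map_pow]; ring
    have h2 := congrArg Complex.re hprod
    rw [Complex.mul_conj, Complex.ofReal_re] at h2
    rw [h2, Complex.re_sum]
  have hlt : Complex.normSq (symbolC x t) < Complex.normSq (symbolC x 1) := by
    rw [expand t, expand 1]
    apply Finset.sum_lt_sum
    · intro p _
      simp only [map_one, one_pow, mul_one]
      by_cases h1 : x p.1 = 0; · simp [h1]
      by_cases h2 : x p.2 = 0; · simp [h2]
      set u := t ^ (p.1 : ℕ) * ((starRingEnd ℂ) t) ^ (p.2 : ℕ) with hu_def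
      have hun : u ^ n = 1 := by
        rw [hu_def, mul_pow, ← pow_mul, mul_comm (p.1 : ℕ) n, pow_mul, ht, one_pow, one_mul,
          ← pow_mul, mul_comm (p.2 : ℕ) n, pow_mul, hconjn, one_pow]
      by_cases hu1 : u = 1
      · rw [hu1, mul_one]
      · exact (keyC hn _ _ u h1 h2 (harg _ h1) (harg _ h2) hun hu1).le
    · refine ⟨(k + ⟨1, by omega⟩, k), Finset.mem_univ _, ?_⟩
      simp only [map_one, one_pow, mul_one]
      have hval : (((k + ⟨1, by omega⟩ : Fin n)) : ℕ) = ((k : ℕ) + 1) % n := by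
        rw [Fin.add_def]
      have hmod : (((k : ℕ) + 1) % n + (n - 1) * (k : ℕ)) % n = 1 := by
        have e1 : ((k : ℕ) + 1) + (n - 1) * (k : ℕ) = 1 + n * (k : ℕ) := by
          have h : 1 + (n - 1) = n := by omega
          calc ((k : ℕ) + 1) + (n - 1) * (k : ℕ) = 1 + (1 + (n - 1)) * (k : ℕ) := by ring
            _ = 1 + n * (k : ℕ) := by rw [h]
        rw [Nat.mod_add_mod, e1, Nat.add_mul_mod_self_left, Nat.mod_eq_of_lt (by omega)]
      have hu : t ^ (((k + ⟨1, by omega⟩ : Fin n)) : ℕ) * ((starRingEnd ℂ) t) ^ (k : ℕ) = t := by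
        rw [hconj, ← pow_mul, ← pow_add, hval, ← tpow_mod, hmod, pow_one]
      rw [hu]
      exact keyC hn _ _ t hk2 hk1 (harg _ hk2) (harg _ hk1) ht ht1
  have hsq := Real.sqrt_lt_sqrt (Complex.normSq_nonneg _) hlt
  rwa [← Complex.norm_def, ← Complex.norm_def] at hsq
end
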